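/- arXiv:2210.08617 — 6 statements merged into one kernel-verified Lean document; each statement's English description precedes it below -/
import Mathlib

section
/- Suppose 2 ≤ m ≤ d and i₁ + i₂ + ⋯ + i_{2m-2} = m(m-1) for nonnegative integers i_k with each i_k ≤ d. Then (2/√(3A))^{m(m-1)} · ∏_{k=1}^{2m-2} (d choose i_k) ≤ (4e/√(3A))^{d(d-1)}, where A = ζ(3). -/
open scoped BigOperators

lemma zeta3_partial (N : ℕ) :
    ∑ n ∈ Finset.range (N + 2), (1 / ((n : ℝ)) ^ 3) ≤
      5 / 4 - 1 / (2 * ((N:ℝ) + 1) * ((N:ℝ) + 2)) := by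
  induction N with
  | zero => simp [Finset.sum_range_succ]; norm_num
  | succ M ih =>
      rw [Finset.sum_range_succ]
      have h1 : (1 : ℝ) / ((M + 2 : ℕ) : ℝ) ^ 3 ≤
          1 / (2 * ((M:ℝ) + 1) * ((M:ℝ) + 2)) -
            1 / (2 * ((M:ℝ) + 1 + 1) * ((M:ℝ) + 1 + 2)) := by
        push_cast
        have hM : (0:ℝ) ≤ (M : ℝ) := Nat.cast_nonneg M
        rw [div_sub_div _ _ (by positivity) (by positivity), div_le_div_iff₀ (by positivity)
          (by positivity)]
        ring_nf
        nlinarith [sq_nonneg (M:ℝ), hM, mul_nonneg hM hM, mul_nonneg (mul_nonneg hM hM) hM]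
      push_cast at h1 ih ⊢
      linarith
lemma zeta3_partial' (N : ℕ) :
    ∑ n ∈ Finset.range N, (1 / ((n : ℝ)) ^ 3) ≤ 5 / 4 := by
  have h1 : ∑ n ∈ Finset.range N, (1 / ((n : ℝ)) ^ 3) ≤
      ∑ n ∈ Finset.range (N + 2), (1 / ((n : ℝ)) ^ 3) := by
    apply Finset.sum_le_sum_of_subset_of_nonneg
    · exact Finset.range_subset_range.2 (by omega)
    · intro k _ _; positivity
  refine h1.trans ((zeta3_partial N).trans ?_)
  have : (0:ℝ) < 2 * (N + 1) * (N + 2) := by positivity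
  have : (0:ℝ) ≤ 1 / (2 * (N + 1) * (N + 2)) := by positivity
  linarith

lemma zeta3_re_eq : (riemannZeta 3).re = ∑' n : ℕ, 1 / ((n : ℝ)) ^ 3 := by
  have h3 : riemannZeta 3 = ∑' n : ℕ, 1 / ((n : ℂ)) ^ 3 := by
    have := zeta_nat_eq_tsum_of_gt_one (k := 3) (by norm_num)
    simpa using this
  have hsum : Summable (fun n : ℕ => 1 / ((n : ℂ)) ^ 3) := by
    rw [show (fun n : ℕ => 1 / ((n : ℂ)) ^ 3) = fun n : ℕ => ((1 / ((n : ℝ)) ^ 3 : ℝ) : ℂ) by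
      funext n; push_cast; ring]
    exact (Complex.summable_ofReal).2 (Real.summable_one_div_nat_pow.2 (by norm_num))
  rw [h3, Complex.re_tsum hsum]
  congr 1; funext n
  have : ((n : ℂ)) ^ 3 = (((n : ℝ) ^ 3 : ℝ) : ℂ) := by push_cast; ring
  rw [this, ← Complex.ofReal_one, ← Complex.ofReal_div, Complex.ofReal_re]

lemma zeta3_re_le : (riemannZeta 3).re ≤ 5 / 4 := by
  rw [zeta3_re_eq]
  exact Real.tsum_le_of_sum_range_le (fun n => by positivity) zeta3_partial'

lemma zeta3_re_ge : 1 ≤ (riemannZeta 3).re := by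
  rw [zeta3_re_eq]
  have hsum : Summable (fun n : ℕ => 1 / ((n : ℝ)) ^ 3) :=
    Real.summable_one_div_nat_pow.2 (by norm_num)
  have := Summable.le_tsum hsum 1 (fun j _ => by positivity)
  simpa using this

lemma choose_le_two_pow' (d i : ℕ) : d.choose i ≤ 2 ^ d := by
  rcases le_or_gt i d with h | h
  · calc d.choose i ≤ ∑ m ∈ Finset.range (d + 1), d.choose m :=
        Finset.single_le_sum (fun k _ => Nat.zero_le _) (Finset.mem_range.2 (by omega))
    _ = 2 ^ d := Nat.sum_range_choose d
  · rw [Nat.choose_eq_zero_of_lt h]; exact Nat.zero_le _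

/-- For `2 ≤ m ≤ d` and nonnegative integers `i₁ + ⋯ + i_{2m-2} = m(m-1)` with each
`i_k ≤ d`, we have `(2/√(3A))^{m(m-1)} ∏ C(d, i_k) ≤ (4e/√(3A))^{d(d-1)}`,
where `A = ζ(3)`. -/
theorem binom_product_bound_zeta
    (d m : ℕ) (h2 : 2 ≤ m) (hmd : m ≤ d)
    (i : Fin (2 * m - 2) → ℕ) (hi : ∀ k, i k ≤ d)
    (hsum : ∑ k, i k = m * (m - 1)) :
    (2 / Real.sqrt (3 * (riemannZeta 3).re)) ^ (m * (m - 1)) *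
        ∏ k, (d.choose (i k) : ℝ) ≤
      (4 * Real.exp 1 / Real.sqrt (3 * (riemannZeta 3).re)) ^ (d * (d - 1)) := by
  set B := Real.sqrt (3 * (riemannZeta 3).re) with hB
  have hB0 : 0 < B := Real.sqrt_pos.2 (by linarith [zeta3_re_ge])
  have hB2 : B ≤ 2 := by
    rw [hB, show (2:ℝ) = Real.sqrt 4 by
      rw [show (4:ℝ) = 2^2 by norm_num, Real.sqrt_sq (by norm_num)]]
    exact Real.sqrt_le_sqrt (by linarith [zeta3_re_le])
  have h1B : (1:ℝ) ≤ 2 / B := (one_le_div hB0).2 hB2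
  -- product bound
  have hP : ∏ k, (d.choose (i k) : ℝ) ≤ (4:ℝ) ^ (d * (d - 1)) := by
    calc ∏ k, (d.choose (i k) : ℝ) ≤ ∏ _k : Fin (2 * m - 2), ((2:ℝ) ^ d) := by
          apply Finset.prod_le_prod (fun k _ => by positivity)
          intro k _
          exact_mod_cast Nat.cast_le.2 (choose_le_two_pow' d (i k))
      _ = ((2:ℝ) ^ d) ^ (2 * m - 2) := by
          rw [Finset.prod_const, Finset.card_univ, Fintype.card_fin]
      _ = (2:ℝ) ^ (d * (2 * m - 2)) := by rw [← pow_mul]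
      _ ≤ (2:ℝ) ^ (2 * (d * (d - 1))) := by
          apply pow_le_pow_right₀ (by norm_num)
          have : 2 * m - 2 ≤ 2 * (d - 1) := by omega
          calc d * (2 * m - 2) ≤ d * (2 * (d - 1)) := Nat.mul_le_mul_left d this
            _ = 2 * (d * (d - 1)) := by ring
      _ = (4:ℝ) ^ (d * (d - 1)) := by
          rw [pow_mul]; norm_num
  have hMD : m * (m - 1) ≤ d * (d - 1) := Nat.mul_le_mul hmd (by omega)
  have hP0 : (0:ℝ) ≤ ∏ k, (d.choose (i k) : ℝ) :=
    Finset.prod_nonneg (fun k _ => by positivity)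
  have he : (8:ℝ) ≤ 4 * Real.exp 1 := by
    have := Real.add_one_le_exp 1
    linarith
  calc (2 / B) ^ (m * (m - 1)) * ∏ k, (d.choose (i k) : ℝ)
      ≤ (2 / B) ^ (d * (d - 1)) * (4:ℝ) ^ (d * (d - 1)) := by
        apply mul_le_mul (pow_le_pow_right₀ h1B hMD) hP hP0 (by positivity)
    _ = (8 / B) ^ (d * (d - 1)) := by
        rw [← mul_pow]; congr 1; field_simp; ring
    _ ≤ (4 * Real.exp 1 / B) ^ (d * (d - 1)) := by
        gcongr
end

section
/- If P(x) is a real polynomial of degree d such that the Hankel determinants Δ_m(P) > 0 for all 2 ≤ m ≤ d (where Δ_m is the m×m determinant of power sums of the roots), then P has d distinct real roots (Hermite's criterion). -/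
open scoped BigOperators
open Matrix

lemma quad_reindex {n m : Type*} [Fintype n] [Fintype m] (e : m ≃ n)
    (M : Matrix n n ℝ) (x : n → ℝ) :
    (x ∘ e) ⬝ᵥ (M.submatrix e e) *ᵥ (x ∘ e) = x ⬝ᵥ M *ᵥ x := by
  simp only [dotProduct, mulVec, Function.comp_apply, submatrix_apply]
  rw [← Equiv.sum_comp e (fun i => x i * ∑ j, M i j * x j)]
  refine Finset.sum_congr rfl fun i _ => ?_
  congr 1
  exact Equiv.sum_comp e (fun j => M (e i) j * x j)

lemma posDef_of_submatrix_equiv {n m : Type*} [Fintype n] [Fintype m]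
    (e : m ≃ n) {M : Matrix n n ℝ} (hM : M.IsHermitian)
    (h : (M.submatrix e e).PosDef) : M.PosDef := by
  refine Matrix.PosDef.of_dotProduct_mulVec_pos hM fun x hx => ?_
  have hx' : (x ∘ e) ≠ 0 := by
    intro h0
    apply hx
    funext i
    have := congrFun h0 (e.symm i)
    simpa using this
  have := h.dotProduct_mulVec_pos hx'
  rwa [show star (x ∘ e) = (star x) ∘ e from rfl, show (star x : n → ℝ) = x from rfl,
    quad_reindex e M x] at this

lemma posDef_fromBlocks {m n : Type*} [Fintype m] [DecidableEq m] [Fintype n]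
    {A : Matrix m m ℝ} (B : Matrix m n ℝ) {D : Matrix n n ℝ} (hA : A.PosDef)
    [Invertible A]
    (hS : (D - Bᴴ * A⁻¹ * B).PosDef) (hH : (fromBlocks A B Bᴴ D).IsHermitian) :
    (fromBlocks A B Bᴴ D).PosDef := by
  refine Matrix.PosDef.of_dotProduct_mulVec_pos hH fun z hz => ?_
  set x := z ∘ Sum.inl with hxdef
  set y := z ∘ Sum.inr with hydef
  have hzd : z = Sum.elim x y := (Sum.elim_comp_inl_inr z).symm
  have key := Matrix.schur_complement_eq₁₁ (α := ℝ) B D x y hA.1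
  rw [hzd, dotProduct_mulVec]
  rw [key]
  rcases eq_or_ne y 0 with hy | hy
  · have hx : x ≠ 0 := by
      intro h0
      apply hz
      rw [hzd, hy, h0]
      funext i; cases i <;> rfl
    have h1 : (0:ℝ) < star (x + (A⁻¹ * B) *ᵥ y) ᵥ* A ⬝ᵥ (x + (A⁻¹ * B) *ᵥ y) := by
      rw [← dotProduct_mulVec]
      apply hA.dotProduct_mulVec_pos
      simpa [hy] using hx
    have h2 : (0:ℝ) ≤ star y ᵥ* (D - Bᴴ * A⁻¹ * B) ⬝ᵥ y := by
      rw [← dotProduct_mulVec]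
      exact hS.posSemidef.dotProduct_mulVec_nonneg y
    linarith
  · have h1 : (0:ℝ) ≤ star (x + (A⁻¹ * B) *ᵥ y) ᵥ* A ⬝ᵥ (x + (A⁻¹ * B) *ᵥ y) := by
      rw [← dotProduct_mulVec]
      exact hA.posSemidef.dotProduct_mulVec_nonneg _
    have h2 : (0:ℝ) < star y ᵥ* (D - Bᴴ * A⁻¹ * B) ⬝ᵥ y := by
      rw [← dotProduct_mulVec]
      exact hS.dotProduct_mulVec_pos hy
    linarith

lemma fin1_posDef {S : Matrix (Fin 1) (Fin 1) ℝ} (h : 0 < S.det) : S.PosDef := by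
  rw [det_fin_one] at h
  refine Matrix.PosDef.of_dotProduct_mulVec_pos ?_ fun x hx => ?_
  · ext i j
    fin_cases i; fin_cases j; rfl
  · have hx0 : x 0 ≠ 0 := by
      intro h0
      apply hx; funext i; fin_cases i; exact h0
    have : star x ⬝ᵥ S *ᵥ x = S 0 0 * (x 0 * x 0) := by
      simp [dotProduct, mulVec, Fin.sum_univ_one]
      ring
    rw [this]
    exact mul_pos h (mul_self_pos.mpr hx0)

lemma sylvester_criterion : ∀ (n : ℕ) (H : Matrix (Fin n) (Fin n) ℝ), H.IsSymm →
    (∀ (m : ℕ) (hm : m ≤ n), 0 < (H.submatrix (Fin.castLE hm) (Fin.castLE hm)).det) →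
    H.PosDef := by
  intro n
  induction n with
  | zero =>
    intro H hs _
    refine Matrix.PosDef.of_dotProduct_mulVec_pos ?_ fun x hx => absurd (Subsingleton.elim x 0) hx
    rw [IsHermitian, conjTranspose_eq_transpose_of_trivial]
    exact hs
  | succ n ih =>
    intro H hs hmin
    have hHerm : H.IsHermitian := by
      rw [IsHermitian, conjTranspose_eq_transpose_of_trivial]; exact hs
    set A : Matrix (Fin n) (Fin n) ℝ :=
      H.submatrix (Fin.castLE n.le_succ) (Fin.castLE n.le_succ) with hAdef
    have hA : A.PosDef := by
      apply ih
      · ext i j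
        simp only [hAdef, transpose_apply, submatrix_apply]
        exact congrFun (congrFun hs _) _
      · intro m hm
        have : A.submatrix (Fin.castLE hm) (Fin.castLE hm) =
            H.submatrix (Fin.castLE (hm.trans n.le_succ)) (Fin.castLE (hm.trans n.le_succ)) := by
          rw [hAdef, submatrix_submatrix]
          congr 1
        rw [this]
        exact hmin m _
    have hAdet : 0 < A.det := hA.det_pos
    haveI : Invertible A := A.invertibleOfIsUnitDet (isUnit_iff_ne_zero.mpr hAdet.ne')
    set e : Fin n ⊕ Fin 1 ≃ Fin (n + 1) := finSumFinEquiv with hedef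
    set H' := H.submatrix e e with hH'def
    have hH'herm : H'.IsHermitian := hHerm.submatrix _
    set B := H'.toBlocks₁₂ with hBdef
    set D := H'.toBlocks₂₂ with hDdef
    have h11 : H'.toBlocks₁₁ = A := by
      ext i j
      simp only [toBlocks₁₁, hH'def, submatrix_apply, of_apply, hedef, hAdef]
      congr 1 <;> exact Fin.ext rfl
    have h21 : H'.toBlocks₂₁ = Bᴴ := by
      ext i j
      simp only [toBlocks₂₁, hBdef, toBlocks₁₂, conjTranspose_apply, of_apply, star_trivial]
      exact congrFun (congrFun hH'herm.symm _) _
    have hblocks : H' = fromBlocks A B Bᴴ D := by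
      rw [← h11, ← h21, fromBlocks_toBlocks]
    have hdetH' : 0 < H'.det := by
      rw [hH'def, det_submatrix_equiv_self]
      have := hmin (n+1) (le_refl _)
      have hid : H.submatrix (Fin.castLE (le_refl (n+1))) (Fin.castLE (le_refl (n+1))) = H := by
        have : (Fin.castLE (le_refl (n+1))) = (id : Fin (n+1) → Fin (n+1)) := by
          funext i; exact Fin.ext rfl
        rw [this, submatrix_id_id]
      rwa [hid] at this
    have hdetS : 0 < (D - Bᴴ * A⁻¹ * B).det := by
      have hd : H'.det = A.det * (D - Bᴴ * ⅟A * B).det := by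
        rw [hblocks, det_fromBlocks₁₁]
      rw [invOf_eq_nonsing_inv] at hd
      nlinarith [hdetH', hAdet, hd]
    have hpos' : (D - Bᴴ * A⁻¹ * B).PosDef := fin1_posDef hdetS
    have : H'.PosDef := by
      rw [hblocks]
      exact posDef_fromBlocks B hA hpos' (hblocks ▸ hH'herm)
    exact posDef_of_submatrix_equiv e hHerm this

lemma hankel_det (m : ℕ) (v : Fin m → ℂ) :
    (Matrix.of fun i j : Fin m => ∑ k, v k ^ ((i : ℕ) + (j : ℕ))).det =
      (∏ i : Fin m, ∏ j ∈ Finset.Ioi i, (v j - v i)) ^ 2 := by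
  have h : (Matrix.of fun i j : Fin m => ∑ k, v k ^ ((i : ℕ) + (j : ℕ))) =
      (Matrix.vandermonde v)ᵀ * Matrix.vandermonde v := by
    ext i j
    simp [Matrix.mul_apply, Matrix.vandermonde, pow_add]
  rw [h, Matrix.det_mul, Matrix.det_transpose, Matrix.det_vandermonde, sq]

lemma prod_X_sub_C_roots {d : ℕ} (v : Fin d → ℂ) :
    (∏ i, (Polynomial.X - Polynomial.C (v i))).roots = Multiset.map v Finset.univ.val := by
  have h : ∏ i, (Polynomial.X - Polynomial.C (v i)) =
      (Multiset.map (fun a => Polynomial.X - Polynomial.C a)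
        (Multiset.map v Finset.univ.val)).prod := by
    rw [Multiset.map_map]; rfl
  rw [h, Polynomial.roots_multiset_prod_X_sub_C]

/-- Hermite's criterion: if `P` is a real polynomial of degree `d` with complex
roots `λ₁, …, λ_d` (with multiplicity), and the Hankel determinants
`Δ_m = det (S_{i+j})` of the power sums `S_k = ∑ λᵢᵏ` are (real and) positive
for all `2 ≤ m ≤ d`, then all roots of `P` are real and distinct. -/
theorem hermite_criterion (d : ℕ) (P : Polynomial ℝ) (hd : P.natDegree = d)
    (hP : P ≠ 0) (l : Fin d → ℂ)
    (hroots : P.map (algebraMap ℝ ℂ) =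
      Polynomial.C (P.leadingCoeff : ℂ) * ∏ i, (Polynomial.X - Polynomial.C (l i)))
    (hpos : ∀ m : ℕ, 2 ≤ m → m ≤ d → ∃ r : ℝ, 0 < r ∧
      Matrix.det (Matrix.of fun i j : Fin m => ∑ k, l k ^ ((i : ℕ) + (j : ℕ))) = (r : ℂ)) :
    (∀ i, (l i).im = 0) ∧ Function.Injective l := by
  have ha : P.leadingCoeff ≠ 0 := Polynomial.leadingCoeff_ne_zero.mpr hP
  have haC : (Polynomial.C ((P.leadingCoeff : ℂ))) ≠ 0 :=
    Polynomial.C_ne_zero.mpr (Complex.ofReal_ne_zero.mpr ha)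
  -- injectivity from the top Hankel determinant
  have hinj2 : 2 ≤ d → Function.Injective l := by
    intro hd2
    obtain ⟨r, hr, hdet⟩ := hpos d hd2 le_rfl
    rw [hankel_det] at hdet
    have hprod : (∏ i : Fin d, ∏ j ∈ Finset.Ioi i, (l j - l i)) ≠ 0 := by
      intro h0
      have : (r : ℂ) = 0 := by rw [← hdet, h0]; ring
      exact hr.ne' (by exact_mod_cast this)
    intro i j hij
    by_contra hne
    rcases lt_or_gt_of_ne hne with h | h
    · have h1 := Finset.prod_ne_zero_iff.mp hprod i (Finset.mem_univ i)
      have h2 := Finset.prod_ne_zero_iff.mp h1 j (Finset.mem_Ioi.mpr h)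
      exact h2 (by rw [hij]; ring)
    · have h1 := Finset.prod_ne_zero_iff.mp hprod j (Finset.mem_univ j)
      have h2 := Finset.prod_ne_zero_iff.mp h1 i (Finset.mem_Ioi.mpr h)
      exact h2 (by rw [hij]; ring)
  -- roots are closed under conjugation
  have hmapmap : (P.map (algebraMap ℝ ℂ)).map (starRingEnd ℂ) = P.map (algebraMap ℝ ℂ) := by
    rw [Polynomial.map_map]
    congr 1
    exact RingHom.ext fun x => Complex.conj_ofReal x
  have e1 : (P.map (algebraMap ℝ ℂ)).map (starRingEnd ℂ) =
      Polynomial.C ((P.leadingCoeff : ℂ)) *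
        ∏ i, (Polynomial.X - Polynomial.C ((starRingEnd ℂ) (l i))) := by
    rw [hroots]
    simp [Polynomial.map_mul, Polynomial.map_prod, Polynomial.map_sub, Complex.conj_ofReal]
  have e3 : ∏ i, (Polynomial.X - Polynomial.C ((starRingEnd ℂ) (l i))) =
      ∏ i, (Polynomial.X - Polynomial.C (l i)) :=
    mul_left_cancel₀ haC (e1.symm.trans (hmapmap.trans hroots))
  have hms : Multiset.map (fun i => (starRingEnd ℂ) (l i)) Finset.univ.val =
      Multiset.map l Finset.univ.val := by
    have r1 := congrArg Polynomial.roots e3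
    rwa [prod_X_sub_C_roots, prod_X_sub_C_roots] at r1
  -- power sums are real
  have hSconj : ∀ nn : ℕ, ((∑ k, l k ^ nn : ℂ)).im = 0 := by
    intro nn
    rw [← Complex.conj_eq_iff_im, map_sum]
    simp_rw [map_pow]
    calc (∑ k, (starRingEnd ℂ) (l k) ^ nn)
        = (Multiset.map (fun z => z ^ nn)
            (Multiset.map (fun i => (starRingEnd ℂ) (l i)) Finset.univ.val)).sum := by
          rw [Multiset.map_map]; rfl
      _ = (Multiset.map (fun z => z ^ nn) (Multiset.map l Finset.univ.val)).sum := by rw [hms]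
      _ = ∑ k, l k ^ nn := by rw [Multiset.map_map]; rfl
  -- the real Hankel matrix
  set H : Matrix (Fin d) (Fin d) ℝ :=
    Matrix.of fun i j => (∑ k, l k ^ ((i : ℕ) + (j : ℕ))).re with hHdef
  have hHC : ∀ i j : Fin d, ((H i j : ℝ) : ℂ) = ∑ k, l k ^ ((i : ℕ) + (j : ℕ)) := by
    intro i j
    apply Complex.ext
    · simp [hHdef]
    · simp [hHdef, hSconj]
  have hreal : ∀ i, (l i).im = 0 := by
    by_contra hcon
    push_neg at hcon
    obtain ⟨i0, him⟩ := hcon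
    have hmem : (starRingEnd ℂ) (l i0) ∈ Multiset.map l Finset.univ.val := by
      rw [← hms]
      exact Multiset.mem_map.mpr ⟨i0, Finset.mem_univ i0, rfl⟩
    obtain ⟨j0, _, hj0⟩ := Multiset.mem_map.mp hmem
    have hne : j0 ≠ i0 := by
      intro h0
      rw [h0] at hj0
      exact him (Complex.conj_eq_iff_im.mp hj0.symm)
    have hd2 : 2 ≤ d := by
      have : Nontrivial (Fin d) := ⟨⟨j0, i0, hne⟩⟩
      have := Fintype.one_lt_card_iff_nontrivial.mpr this
      simp at this; omega
    have hd1 : 0 < d := by omega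
    have hinj : Function.Injective l := hinj2 hd2
    -- positive definiteness via Sylvester
    have hsymm : H.IsSymm := by
      ext i j
      simp only [Matrix.transpose_apply, hHdef, Matrix.of_apply]
      rw [Nat.add_comm (j : ℕ) i]
    have hPD : H.PosDef := by
      apply sylvester_criterion d H hsymm
      intro m hm
      match m, hm with
      | 0, hm => simp [Matrix.det_fin_zero]
      | 1, hm =>
        rw [Matrix.det_fin_one]
        have h00 : (∑ k : Fin d, l k ^ ((0 : ℕ) + (0 : ℕ))) = (d : ℂ) := by
          simp
        simp only [Matrix.submatrix_apply, hHdef, Matrix.of_apply]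
        rw [show ((Fin.castLE hm 0 : Fin d) : ℕ) = 0 from rfl]
        rw [show ((0 : ℕ) + (0 : ℕ) = 0) from rfl] at h00 ⊢
        rw [h00]
        simpa using hd1
      | (m + 2), hm =>
        obtain ⟨r, hr, hdet⟩ := hpos (m + 2) (by omega) hm
        have hmap : (H.submatrix (Fin.castLE hm) (Fin.castLE hm)).map Complex.ofRealHom =
            Matrix.of fun i j : Fin (m + 2) => ∑ k, l k ^ ((i : ℕ) + (j : ℕ)) := by
          ext i j
          simp only [Matrix.map_apply, Matrix.submatrix_apply, Matrix.of_apply]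
          rw [show (Complex.ofRealHom (H (Fin.castLE hm i) (Fin.castLE hm j)) : ℂ)
              = ((H (Fin.castLE hm i) (Fin.castLE hm j) : ℝ) : ℂ) from rfl, hHC]
          norm_num
        have hcast : (((H.submatrix (Fin.castLE hm) (Fin.castLE hm)).det : ℝ) : ℂ)
            = (r : ℂ) := by
          rw [show (((H.submatrix (Fin.castLE hm) (Fin.castLE hm)).det : ℝ) : ℂ)
              = Complex.ofRealHom ((H.submatrix (Fin.castLE hm) (Fin.castLE hm)).det) from rfl,
            RingHom.map_det, RingHom.mapMatrix_apply, hmap, hdet]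
        have : (H.submatrix (Fin.castLE hm) (Fin.castLE hm)).det = r := by
          exact_mod_cast hcast
        rw [this]; exact hr
    -- the Lagrange test polynomial
    have hinjOn : Set.InjOn l ↑(Finset.univ : Finset (Fin d)) := fun a _ b _ h => hinj h
    set g := Lagrange.basis Finset.univ l i0 with hgdef
    have hg1 : g.eval (l i0) = 1 := Lagrange.eval_basis_self hinjOn (Finset.mem_univ i0)
    have hg0 : ∀ j, j ≠ i0 → g.eval (l j) = 0 := fun j hj =>
      Lagrange.eval_basis_of_ne (Ne.symm hj) (Finset.mem_univ j)
    set h := g.map (starRingEnd ℂ) with hhdef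
    have hhev : ∀ w : ℂ, h.eval ((starRingEnd ℂ) w) = (starRingEnd ℂ) (g.eval w) := by
      intro w
      rw [hhdef, Polynomial.eval_map, Polynomial.eval₂_at_apply]
    set f := Polynomial.C Complex.I * g - Polynomial.C Complex.I * h with hfdef
    have hci0 : (starRingEnd ℂ) (l j0) = l i0 := by rw [hj0]; exact Complex.conj_conj _
    have hfi0 : f.eval (l i0) = Complex.I := by
      have h1 : h.eval (l i0) = 0 := by
        rw [← hci0, hhev, hg0 j0 hne, _root_.map_zero]
      simp [hfdef, h1, hg1]
    have hfj0 : f.eval (l j0) = -Complex.I := by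
      have h1 : h.eval (l j0) = 1 := by rw [hj0, hhev, hg1, _root_.map_one]
      simp [hfdef, hg0 j0 hne, h1]
    have hfk : ∀ k, k ≠ i0 → k ≠ j0 → f.eval (l k) = 0 := by
      intro k hk1 hk2
      have hmemk : (starRingEnd ℂ) (l k) ∈ Multiset.map l Finset.univ.val := by
        rw [← hms]
        exact Multiset.mem_map.mpr ⟨k, Finset.mem_univ k, rfl⟩
      obtain ⟨mk, _, hmk⟩ := Multiset.mem_map.mp hmemk
      have hmki0 : mk ≠ i0 := by
        intro h0
        apply hk2
        apply hinj
        rw [← Complex.conj_conj (l k), ← hmk, h0, ← hj0]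
      have h1 : h.eval (l k) = 0 := by
        have hlk : l k = (starRingEnd ℂ) (l mk) := by rw [hmk, Complex.conj_conj]
        rw [hlk, hhev, hg0 mk hmki0, _root_.map_zero]
      simp [hfdef, hg0 k hk1, h1]
    -- degree bound and coefficients
    have hgdeg : g.natDegree = d - 1 := by
      have := Lagrange.natDegree_basis hinjOn (Finset.mem_univ i0)
      simpa using this
    have hfdeg : f.natDegree < d := by
      have h1 := Polynomial.natDegree_sub_le (Polynomial.C Complex.I * g)
        (Polynomial.C Complex.I * h)
      have h2 := Polynomial.natDegree_C_mul_le Complex.I g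
      have h3 := Polynomial.natDegree_C_mul_le Complex.I h
      have h4 : h.natDegree ≤ g.natDegree := Polynomial.natDegree_map_le
      have h5 : f.natDegree ≤ d - 1 := le_trans h1 (max_le (le_trans h2 (le_of_eq hgdeg))
        (le_trans h3 (le_trans h4 (le_of_eq hgdeg))))
      omega
    have hcoeff : ∀ nn : ℕ, (f.coeff nn).im = 0 := by
      intro nn
      rw [hfdef]
      simp only [Polynomial.coeff_sub, Polynomial.coeff_C_mul, hhdef, Polynomial.coeff_map]
      simp [Complex.sub_im, Complex.mul_im]
    set x : Fin d → ℝ := fun nn => (f.coeff nn).re with hxdef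
    have hxC : ∀ nn : Fin d, ((x nn : ℝ) : ℂ) = f.coeff nn := by
      intro nn
      apply Complex.ext
      · simp [hxdef]
      · simp [hxdef, hcoeff]
    have hf0 : f ≠ 0 := by
      intro h0
      rw [h0] at hfi0
      simp at hfi0
      exact Complex.I_ne_zero hfi0.symm
    have hx0 : x ≠ 0 := by
      intro h0
      apply hf0
      apply Polynomial.leadingCoeff_eq_zero.mp
      have hre : (f.coeff f.natDegree).re = 0 := congrFun h0 ⟨f.natDegree, hfdeg⟩
      exact Complex.ext (by simpa using hre) (by simpa using hcoeff f.natDegree)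
    -- the quadratic form evaluates to -2
    have hQeval : (∑ k, (f.eval (l k)) ^ 2) = (-2 : ℂ) := by
      rw [← Finset.sum_subset (Finset.subset_univ ({i0, j0} : Finset (Fin d)))
        (fun k _ hk => ?_)]
      · rw [Finset.sum_insert (by simpa using Ne.symm hne), Finset.sum_singleton, hfi0, hfj0]
        rw [neg_pow, Complex.I_sq]
        ring
      · simp only [Finset.mem_insert, Finset.mem_singleton, not_or] at hk
        rw [hfk k hk.1 hk.2]
        ring
    have hev : ∀ k : Fin d, f.eval (l k) = ∑ i : Fin d, (x i : ℂ) * l k ^ (i : ℕ) := by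
      intro k
      rw [Polynomial.eval_eq_sum_range' hfdeg,
        ← Fin.sum_univ_eq_sum_range (fun i => f.coeff i * l k ^ i)]
      exact Finset.sum_congr rfl fun i _ => by rw [hxC]
    have hformR : dotProduct x (H.mulVec x) =
        ∑ i : Fin d, ∑ j : Fin d, x i * x j * H i j := by
      simp only [dotProduct, Matrix.mulVec]
      refine Finset.sum_congr rfl fun i _ => ?_
      rw [Finset.mul_sum]
      refine Finset.sum_congr rfl fun j _ => ?_
      ring
    have key : ((dotProduct x (H.mulVec x) : ℝ) : ℂ) = ∑ k, (f.eval (l k)) ^ 2 := by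
      rw [hformR]
      push_cast
      calc (∑ i : Fin d, ∑ j : Fin d, ((x i : ℂ)) * (x j) * ((H i j : ℝ) : ℂ))
          = ∑ i : Fin d, ∑ j : Fin d, ∑ k : Fin d,
              ((x i : ℂ) * l k ^ (i : ℕ)) * ((x j : ℂ) * l k ^ (j : ℕ)) := by
            refine Finset.sum_congr rfl fun i _ => Finset.sum_congr rfl fun j _ => ?_
            rw [hHC, Finset.mul_sum]
            refine Finset.sum_congr rfl fun k _ => ?_
            rw [pow_add]
            ring
        _ = ∑ i : Fin d, ∑ k : Fin d, ∑ j : Fin d,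
              ((x i : ℂ) * l k ^ (i : ℕ)) * ((x j : ℂ) * l k ^ (j : ℕ)) :=
            Finset.sum_congr rfl fun i _ => Finset.sum_comm
        _ = ∑ k : Fin d, ∑ i : Fin d, ∑ j : Fin d,
              ((x i : ℂ) * l k ^ (i : ℕ)) * ((x j : ℂ) * l k ^ (j : ℕ)) :=
            Finset.sum_comm
        _ = ∑ k : Fin d, (f.eval (l k)) ^ 2 := by
            refine Finset.sum_congr rfl fun k _ => ?_
            rw [hev, sq, Finset.sum_mul_sum]
    have hQneg : dotProduct x (H.mulVec x) = -2 := by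
      have := key.trans hQeval
      exact_mod_cast this
    have hQpos := hPD.dotProduct_mulVec_pos hx0
    rw [show star x = x from by funext i; simp] at hQpos
    rw [hQneg] at hQpos
    linarith
  refine ⟨hreal, ?_⟩
  rcases Nat.lt_or_ge d 2 with h | h
  · intro a b _
    exact Fin.ext (by omega)
  · exact hinj2 h
end

section
/- For each m ≤ d, the Hankel determinant of power sums of the roots of the d-th Hermite polynomial H_d(x) satisfies Δ_m(H_d) ≥ 1. -/
open scoped BigOperators Polynomial

/-- The physicists' Hermite polynomials, defined by the recurrence
`H₀ = 1`, `H₁ = 2X`, `H_{n+2} = 2X·H_{n+1} - 2(n+1)·H_n`. -/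
noncomputable def hermitePhys : ℕ → Polynomial ℝ
  | 0 => 1
  | 1 => 2 * Polynomial.X
  | (n + 2) => 2 * Polynomial.X * hermitePhys (n + 1) -
      Polynomial.C (2 * ((n : ℝ) + 1)) * hermitePhys n

open Polynomial Finset

/-- Monic Hermite polynomials. -/
noncomputable def hermMonic : ℕ → ℝ[X]
  | 0 => 1
  | 1 => X
  | (n + 2) => X * hermMonic (n + 1) - C (((n : ℝ) + 1) / 2) * hermMonic n

lemma hermitePhys_eq : ∀ n, hermitePhys n = C ((2:ℝ) ^ n) * hermMonic n
  | 0 => by simp [hermitePhys, hermMonic]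
  | 1 => by
      simp only [hermitePhys, hermMonic, pow_one]
      rw [map_ofNat]
  | (n + 2) => by
      have ha : C ((2:ℝ)^(n+2)) * (X * hermMonic (n+1))
          = 2 * X * (C ((2:ℝ)^(n+1)) * hermMonic (n+1)) := by
        rw [show ((2:ℝ))^(n+2) = 2 * 2^(n+1) by ring, map_mul, map_ofNat]; ring
      have hb : C ((2:ℝ)^(n+2)) * (C (((n:ℝ)+1)/2) * hermMonic n)
          = C (2*((n:ℝ)+1)) * (C ((2:ℝ)^n) * hermMonic n) := by
        rw [← mul_assoc, ← mul_assoc, ← map_mul, ← map_mul]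
        congr 2
        field_simp
        ring
      rw [hermitePhys, hermMonic, hermitePhys_eq (n+1), hermitePhys_eq n, mul_sub, ha, hb]


/-- Tridiagonal matrix with `X` on the diagonal and `-C (b k)` on the off-diagonals. -/
noncomputable def triMat (b : ℕ → ℝ) (n : ℕ) : Matrix (Fin n) (Fin n) ℝ[X] :=
  Matrix.of fun p q =>
    if (p:ℕ) = q then X else if (p:ℕ)+1 = q then -C (b p) else
      if (q:ℕ)+1 = p then -C (b q) else 0

lemma triMat_apply (b : ℕ → ℝ) (n : ℕ) (p q : Fin n) :
    triMat b n p q =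
      if (p:ℕ) = q then X else if (p:ℕ)+1 = q then -C (b p) else
      if (q:ℕ)+1 = p then -C (b q) else 0 := rfl

lemma triMat_det_rec (b : ℕ → ℝ) (n : ℕ) :
    (triMat b (n+2)).det = X * (triMat b (n+1)).det - (C (b n))^2 * (triMat b n).det := by
  have hlast : ((Fin.last (n+1) : Fin (n+2)) : ℕ) = n + 1 := rfl
  set cn : Fin (n+2) := ⟨n, by omega⟩ with hcn
  have hcnval : (cn : ℕ) = n := rfl
  have hcnsa : ∀ q : Fin (n+1), ((cn.succAbove q : Fin (n+2)) : ℕ)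
      = if (q:ℕ) < n then (q:ℕ) else (q:ℕ)+1 := by
    intro q
    rcases lt_or_ge (q:ℕ) n with h | h
    · rw [Fin.succAbove_of_castSucc_lt]
      · simp [h]
      · simpa [Fin.lt_def] using h
    · rw [Fin.succAbove_of_le_castSucc]
      · simp [Fin.val_succ, Nat.not_lt.2 h]
      · simpa [Fin.le_def] using h
  rw [Matrix.det_succ_row _ (Fin.last (n+1))]
  have hA : (triMat b (n+2)).submatrix (Fin.last (n+1)).succAbove (Fin.last (n+1)).succAbove
      = triMat b (n+1) := by
    ext p q
    simp [Matrix.submatrix_apply, Fin.succAbove_last, triMat_apply]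
  -- the sum has only two nonzero terms : j = cn and j = last
  have hzero : ∀ j : Fin (n+2), j ∈ (Finset.univ : Finset (Fin (n+2))) →
      j ∉ ({cn, Fin.last (n+1)} : Finset (Fin (n+2))) →
      (-1 : ℝ[X]) ^ ((Fin.last (n+1) : ℕ) + (j : ℕ)) * triMat b (n+2) (Fin.last (n+1)) j *
        ((triMat b (n+2)).submatrix (Fin.last (n+1)).succAbove j.succAbove).det = 0 := by
    intro j _ hj
    simp only [Finset.mem_insert, Finset.mem_singleton] at hj
    push_neg at hj
    obtain ⟨hj1, hj2⟩ := hj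
    have hv1 : (j : ℕ) ≠ n := fun h => hj1 (Fin.ext h)
    have hv2 : (j : ℕ) ≠ n + 1 := fun h => hj2 (Fin.ext h)
    have : triMat b (n+2) (Fin.last (n+1)) j = 0 := by
      rw [triMat_apply]
      rw [hlast]
      rw [if_neg (by omega), if_neg (by omega), if_neg (by omega)]
    rw [this, mul_zero, zero_mul]
  rw [← Finset.sum_subset (Finset.subset_univ ({cn, Fin.last (n+1)} : Finset (Fin (n+2)))) hzero]
  rw [Finset.sum_pair (by intro h; exact absurd (congrArg Fin.val h) (by simp [hcnval, hlast]))]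
  -- entry at (last, cn)
  have e1 : triMat b (n+2) (Fin.last (n+1)) cn = -C (b n) := by
    rw [triMat_apply, hlast, hcnval, if_neg (by omega), if_neg (by omega), if_pos rfl]
  have e2 : triMat b (n+2) (Fin.last (n+1)) (Fin.last (n+1)) = X := by
    rw [triMat_apply, hlast, if_pos rfl]
  -- the interesting minor
  have hB : ((triMat b (n+2)).submatrix (Fin.last (n+1)).succAbove cn.succAbove).det
      = -C (b n) * (triMat b n).det := by
    rw [Matrix.det_succ_column _ (Fin.last n)]
    have hzero' : ∀ p : Fin (n+1), p ∈ (Finset.univ : Finset (Fin (n+1))) →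
        p ≠ Fin.last n →
        (-1 : ℝ[X]) ^ ((p : ℕ) + ((Fin.last n : Fin (n+1)) : ℕ)) *
          ((triMat b (n+2)).submatrix (Fin.last (n+1)).succAbove cn.succAbove) p (Fin.last n) *
          ((((triMat b (n+2)).submatrix (Fin.last (n+1)).succAbove cn.succAbove)).submatrix
            p.succAbove (Fin.last n).succAbove).det = 0 := by
      intro p _ hp
      have hv : (p : ℕ) ≠ n := fun h => hp (Fin.ext h)
      have hple : (p : ℕ) < n + 1 := p.isLt
      have hcol : ((cn.succAbove (Fin.last n) : Fin (n+2)) : ℕ) = n + 1 := by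
        rw [hcnsa]; simp
      have : ((triMat b (n+2)).submatrix (Fin.last (n+1)).succAbove cn.succAbove) p (Fin.last n)
          = 0 := by
        rw [Matrix.submatrix_apply, Fin.succAbove_last, triMat_apply]
        rw [if_neg (by simp [Fin.coe_castSucc, hcol]; omega),
          if_neg (by simp [Fin.coe_castSucc, hcol]; omega),
          if_neg (by simp [Fin.coe_castSucc, hcol]; omega)]
      rw [this, mul_zero, zero_mul]
    rw [Finset.sum_eq_single_of_mem (Fin.last n) (Finset.mem_univ _) hzero']
    have hentry : ((triMat b (n+2)).submatrix (Fin.last (n+1)).succAbove cn.succAbove)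
        (Fin.last n) (Fin.last n) = -C (b n) := by
      rw [Matrix.submatrix_apply, Fin.succAbove_last, triMat_apply]
      have h1 : ((Fin.castSucc (Fin.last n) : Fin (n+2)) : ℕ) = n := by simp
      have h2 : ((cn.succAbove (Fin.last n) : Fin (n+2)) : ℕ) = n + 1 := by
        rw [hcnsa]; simp
      rw [h1, h2, if_neg (by omega), if_pos (by omega)]
    have hsub : (((triMat b (n+2)).submatrix (Fin.last (n+1)).succAbove cn.succAbove).submatrix
        (Fin.last n).succAbove (Fin.last n).succAbove) = triMat b n := by
      ext p q
      simp only [Matrix.submatrix_apply, Fin.succAbove_last]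
      have hr : ((Fin.castSucc (Fin.castSucc p) : Fin (n+2)) : ℕ) = (p : ℕ) := by simp
      have hc : ((cn.succAbove (Fin.castSucc q) : Fin (n+2)) : ℕ) = (q : ℕ) := by
        rw [hcnsa]; simp [q.isLt]
      rw [triMat_apply, triMat_apply, hr, hc]
    rw [hentry, hsub]
    have : (-1 : ℝ[X]) ^ (((Fin.last n : Fin (n+1)) : ℕ) + ((Fin.last n : Fin (n+1)) : ℕ))
        = 1 := by
      simp [Even.neg_one_pow ⟨(n : ℕ), rfl⟩]
    rw [this]; ring
  rw [e1, e2, hA, hB, hlast, hcnval]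
  have hsign1 : (-1 : ℝ[X]) ^ ((n+1) + n) = -1 := by
    have : Odd ((n+1) + n) := ⟨n, by ring⟩
    exact Odd.neg_one_pow this
  have hsign2 : (-1 : ℝ[X]) ^ ((n+1) + (n+1)) = 1 := by
    have : Even ((n+1) + (n+1)) := ⟨n+1, rfl⟩
    exact Even.neg_one_pow this
  rw [hsign1, hsign2]
  ring


lemma sum_choose_shift (j n : ℕ) :
    ∑ k ∈ range n, (k + j).choose j = (n + j).choose (j + 1) := by
  induction n with
  | zero => simp [Nat.choose_succ_self]
  | succ n ih =>
      rw [sum_range_succ, ih, show n + 1 + j = (n + j) + 1 by ring,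
        Nat.choose_succ_succ' (n + j) j, add_comm]

lemma prod_shift (k j : ℕ) :
    ∏ t ∈ range j, (k + t + 1) = j.factorial * (k + j).choose j := by
  have h1 : ∀ j, ∏ t ∈ range j, (k + t + 1) = (k+1).ascFactorial j := by
    intro j
    induction j with
    | zero => simp
    | succ j ih =>
        rw [prod_range_succ, ih, Nat.ascFactorial_succ]
        ring
  have h2 : k.factorial * ((k+1).ascFactorial j) = (k+j).factorial :=
    Nat.factorial_mul_ascFactorial k j
  have h3 : (k+j).choose j * j.factorial * k.factorial = (k+j).factorial := by
    have := Nat.choose_mul_factorial_mul_factorial (Nat.le_add_left j k)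
    simpa [Nat.add_sub_cancel] using this
  have hk : 0 < k.factorial := Nat.factorial_pos k
  rw [h1 j]
  apply Nat.eq_of_mul_eq_mul_left hk
  rw [h2, ← h3]; ring

lemma Pprod_succ (m : ℕ) :
    ∏ j ∈ range (m+1), (j.factorial * (m+1).choose (j+1))
      = (∏ j ∈ range m, (j.factorial * m.choose (j+1))) * (m+1)^m := by
  rw [prod_range_succ, Nat.choose_self, mul_one]
  rw [prod_mul_distrib, prod_mul_distrib]
  have key : (∏ j ∈ range m, (m+1).choose (j+1)) * m.factorial
      = (∏ j ∈ range m, m.choose (j+1)) * (m+1)^m := by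
    have hfac : ∏ j ∈ range m, (m - j) = m.factorial := by
      rw [← prod_range_reflect]
      rw [← prod_range_add_one_eq_factorial]
      exact prod_congr rfl fun j hj => by
        rw [mem_range] at hj; omega
    calc (∏ j ∈ range m, (m+1).choose (j+1)) * m.factorial
        = ∏ j ∈ range m, ((m+1).choose (j+1) * (m - j)) := by
          rw [prod_mul_distrib, hfac]
      _ = ∏ j ∈ range m, (m.choose (j+1) * (m+1)) := by
          refine prod_congr rfl fun j hj => ?_
          rw [mem_range] at hj
          rw [show m - j = m + 1 - (j+1) by omega]
          exact (Nat.choose_mul_succ_eq m (j+1)).symm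
      _ = (∏ j ∈ range m, m.choose (j+1)) * (m+1)^m := by
          rw [prod_mul_distrib, prod_const, card_range]
  calc (∏ j ∈ range m, j.factorial) * (∏ j ∈ range m, (m+1).choose (j+1)) * m.factorial
      = (∏ j ∈ range m, j.factorial) * ((∏ j ∈ range m, (m+1).choose (j+1)) * m.factorial) := by
        ring
    _ = (∏ j ∈ range m, j.factorial) * ((∏ j ∈ range m, m.choose (j+1)) * (m+1)^m) := by
        rw [key]
    _ = _ := by ring

lemma Pprod_ge (m : ℕ) :
    2 ^ (∑ j ∈ range m, j) ≤ ∏ j ∈ range m, (j.factorial * m.choose (j+1)) := by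
  induction m with
  | zero => simp
  | succ m ih =>
      rw [Pprod_succ, sum_range_succ, pow_add]
      cases m with
      | zero => simp
      | succ k =>
          exact Nat.mul_le_mul ih (Nat.pow_le_pow_left (by omega) _)

/-- The Jacobi matrix of the (physicists') Hermite polynomials. -/
noncomputable def Jmat (d : ℕ) : Matrix (Fin d) (Fin d) ℝ :=
  Matrix.of fun p q =>
    if (p:ℕ)+1 = q then Real.sqrt (((q:ℕ):ℝ)/2)
    else if (q:ℕ)+1 = p then Real.sqrt (((p:ℕ):ℝ)/2) else 0

noncomputable def bH : ℕ → ℝ := fun k => Real.sqrt (((k:ℝ)+1)/2)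

lemma Jmat_apply (d : ℕ) (p q : Fin d) :
    Jmat d p q = if (p:ℕ)+1 = q then Real.sqrt (((q:ℕ):ℝ)/2)
      else if (q:ℕ)+1 = p then Real.sqrt (((p:ℕ):ℝ)/2) else 0 := rfl

lemma charmatrix_Jmat (d : ℕ) : Matrix.charmatrix (Jmat d) = triMat bH d := by
  ext p q
  by_cases h : p = q
  · subst h
    rw [Matrix.charmatrix_apply_eq, triMat_apply, if_pos rfl]
    have h0 : Jmat d p p = 0 := by rw [Jmat_apply, if_neg (by omega), if_neg (by omega)]
    rw [h0, map_zero, sub_zero]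
  · have hv : (p:ℕ) ≠ (q:ℕ) := fun hh => h (Fin.ext hh)
    rw [Matrix.charmatrix_apply_ne _ _ _ h, triMat_apply, if_neg hv, Jmat_apply]
    by_cases h1 : (p:ℕ)+1 = (q:ℕ)
    · rw [if_pos h1, if_pos h1]
      unfold bH
      congr 2
      rw [← h1]; push_cast; ring
    · rw [if_neg h1, if_neg h1]
      by_cases h2 : (q:ℕ)+1 = (p:ℕ)
      · rw [if_pos h2, if_pos h2]
        unfold bH
        congr 2
        rw [← h2]; push_cast; ring
      · rw [if_neg h2, if_neg h2, map_zero, neg_zero]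

lemma det_triMat_bH : ∀ n, (triMat bH n).det = hermMonic n
  | 0 => Matrix.det_fin_zero
  | 1 => by
      rw [Matrix.det_fin_one]
      simp [triMat_apply, hermMonic]
  | (n+2) => by
      rw [triMat_det_rec, det_triMat_bH (n+1), det_triMat_bH n, hermMonic]
      have : (C (bH n))^2 = C (((n:ℝ)+1)/2) := by
        rw [← map_pow]
        congr 1
        unfold bH
        rw [Real.sq_sqrt (by positivity)]
      rw [this]

lemma charpoly_Jmat (d : ℕ) : (Jmat d).charpoly = hermMonic d := by
  rw [show (Jmat d).charpoly = (Matrix.charmatrix (Jmat d)).det from rfl,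
    charmatrix_Jmat, det_triMat_bH]

lemma isHermitian_Jmat (d : ℕ) : (Jmat d).IsHermitian := by
  show Matrix.conjTranspose (Jmat d) = Jmat d
  ext p q
  simp only [Matrix.conjTranspose_apply, star_trivial]
  rw [Jmat_apply, Jmat_apply]
  by_cases h1 : (q:ℕ)+1 = (p:ℕ) <;> by_cases h2 : (p:ℕ)+1 = (q:ℕ)
  · omega
  · rw [if_pos h1, if_neg h2, if_pos h1]
  · rw [if_neg h1, if_pos h2, if_pos h2]
  · rw [if_neg h1, if_neg h2, if_neg h2, if_neg h1]

lemma charpoly_conj {n : Type*} [Fintype n] [DecidableEq n] (P A Q : Matrix n n ℝ)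
    (hPQ : P * Q = 1) : (P * A * Q).charpoly = A.charpoly := by
  have hm : Matrix.charmatrix (P * A * Q)
      = (C : ℝ →+* ℝ[X]).mapMatrix P * Matrix.charmatrix A * (C : ℝ →+* ℝ[X]).mapMatrix Q := by
    rw [show Matrix.charmatrix (P * A * Q)
        = Matrix.scalar _ (X : ℝ[X]) - (C : ℝ →+* ℝ[X]).mapMatrix (P * A * Q) from rfl]
    rw [show Matrix.charmatrix A
        = Matrix.scalar _ (X : ℝ[X]) - (C : ℝ →+* ℝ[X]).mapMatrix A from rfl]
    rw [Matrix.mul_sub, Matrix.sub_mul]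
    congr 1
    · have hc : Commute (Matrix.scalar _ (X : ℝ[X])) ((C : ℝ →+* ℝ[X]).mapMatrix P) :=
        Matrix.scalar_commute _ (fun r' => Commute.all _ _) _
      rw [← hc.eq, mul_assoc, ← map_mul, hPQ, map_one, mul_one]
    · rw [map_mul, map_mul]
  rw [show (P * A * Q).charpoly = (Matrix.charmatrix (P * A * Q)).det from rfl, hm,
    Matrix.det_mul, Matrix.det_mul]
  have : ((C : ℝ →+* ℝ[X]).mapMatrix P).det * ((C : ℝ →+* ℝ[X]).mapMatrix Q).det = 1 := by
    rw [← Matrix.det_mul, ← map_mul, hPQ, map_one, Matrix.det_one]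
  calc ((C : ℝ →+* ℝ[X]).mapMatrix P).det * (Matrix.charmatrix A).det *
        ((C : ℝ →+* ℝ[X]).mapMatrix Q).det
      = (Matrix.charmatrix A).det *
        (((C : ℝ →+* ℝ[X]).mapMatrix P).det * ((C : ℝ →+* ℝ[X]).mapMatrix Q).det) := by ring
    _ = A.charpoly := by rw [this, mul_one]; rfl

lemma hermMonic_eq_prod_eig (d : ℕ) :
    hermMonic d = ∏ i, (X - C ((isHermitian_Jmat d).eigenvalues i)) := by
  set hJ := isHermitian_Jmat d with hhJ
  set U : Matrix (Fin d) (Fin d) ℝ := (hJ.eigenvectorUnitary : Matrix (Fin d) (Fin d) ℝ)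
    with hU
  have hU2 : star U * U = 1 := Matrix.mem_unitaryGroup_iff'.mp (hJ.eigenvectorUnitary).2
  have hdiag : star U * Jmat d * U
      = Matrix.diagonal (RCLike.ofReal ∘ hJ.eigenvalues) := Matrix.IsHermitian.conjStarAlgAut_star_eigenvectorUnitary hJ
  have hcm : Matrix.charmatrix (Matrix.diagonal (RCLike.ofReal ∘ hJ.eigenvalues) :
      Matrix (Fin d) (Fin d) ℝ) = Matrix.diagonal (fun i => X - C (hJ.eigenvalues i)) := by
    ext p q
    by_cases h : p = q
    · subst h
      rw [Matrix.charmatrix_apply_eq, Matrix.diagonal_apply_eq, Matrix.diagonal_apply_eq]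
      simp
    · rw [Matrix.charmatrix_apply_ne _ _ _ h, Matrix.diagonal_apply_ne _ h,
        Matrix.diagonal_apply_ne _ h, map_zero, neg_zero]
  calc hermMonic d = (Jmat d).charpoly := (charpoly_Jmat d).symm
    _ = (star U * Jmat d * U).charpoly := (charpoly_conj (star U) (Jmat d) U hU2).symm
    _ = ∏ i, (X - C (hJ.eigenvalues i)) := by
        rw [hdiag, show (Matrix.diagonal (RCLike.ofReal ∘ hJ.eigenvalues) :
            Matrix (Fin d) (Fin d) ℝ).charpoly
          = (Matrix.charmatrix (Matrix.diagonal (RCLike.ofReal ∘ hJ.eigenvalues) :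
            Matrix (Fin d) (Fin d) ℝ)).det from rfl, hcm, Matrix.det_diagonal]

lemma trace_Jpow (d n : ℕ) :
    (Jmat d ^ n).trace = ∑ i, (isHermitian_Jmat d).eigenvalues i ^ n := by
  set hJ := isHermitian_Jmat d with hhJ
  set U : Matrix (Fin d) (Fin d) ℝ := (hJ.eigenvectorUnitary : Matrix (Fin d) (Fin d) ℝ)
    with hU
  have hU1 : U * star U = 1 := Matrix.mem_unitaryGroup_iff.mp (hJ.eigenvectorUnitary).2
  have hU2 : star U * U = 1 := Matrix.mem_unitaryGroup_iff'.mp (hJ.eigenvectorUnitary).2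
  set D : Matrix (Fin d) (Fin d) ℝ := Matrix.diagonal (RCLike.ofReal ∘ hJ.eigenvalues) with hD
  have hJd : Jmat d = U * D * star U := hJ.spectral_theorem
  have hcancel : ∀ XX : Matrix (Fin d) (Fin d) ℝ, star U * (U * XX) = XX := by
    intro XX; rw [← Matrix.mul_assoc, hU2, Matrix.one_mul]
  have hpow : ∀ n, Jmat d ^ n = U * D ^ n * star U := by
    intro n
    induction n with
    | zero => rw [pow_zero, pow_zero, Matrix.mul_one, hU1]
    | succ n ih =>
        rw [pow_succ, ih, pow_succ]
        conv_lhs => rw [hJd]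
        simp only [Matrix.mul_assoc]
        rw [hcancel]
  rw [hpow n, Matrix.trace_mul_cycle, hU2, Matrix.one_mul, Matrix.diagonal_pow,
    Matrix.trace_diagonal]
  simp

lemma powersum_eq_trace {d : ℕ} (l : Fin d → ℝ)
    (h : (∏ i, (X - C (l i)) : ℝ[X])
      = ∏ i, (X - C ((isHermitian_Jmat d).eigenvalues i)))
    (n : ℕ) : ∑ k, l k ^ n = (Jmat d ^ n).trace := by
  rw [trace_Jpow]
  have hprod : ∀ g : Fin d → ℝ, (∏ i, (X - C (g i)) : ℝ[X])
      = ((Multiset.map g Finset.univ.val).map (fun a => X - C a)).prod := by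
    intro g
    rw [Finset.prod_eq_multiset_prod, Multiset.map_map]
    rfl
  have hms : Multiset.map l Finset.univ.val
      = Multiset.map (isHermitian_Jmat d).eigenvalues Finset.univ.val := by
    have h1 := Polynomial.roots_multiset_prod_X_sub_C (Multiset.map l Finset.univ.val)
    have h2 := Polynomial.roots_multiset_prod_X_sub_C
      (Multiset.map (isHermitian_Jmat d).eigenvalues Finset.univ.val)
    rw [← h1, ← h2, ← hprod, ← hprod, h]
  have hsum : ∀ g : Fin d → ℝ, ∑ k, g k ^ n
      = ((Multiset.map g Finset.univ.val).map (fun x => x ^ n)).sum := by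
    intro g
    rw [Finset.sum_eq_multiset_sum, Multiset.map_map]
    rfl
  rw [hsum l, hsum _, hms]

lemma Jpow_band (d : ℕ) : ∀ (n : ℕ) (p q : Fin d), (p:ℕ) + n < (q:ℕ) → (Jmat d ^ n) p q = 0 := by
  intro n
  induction n with
  | zero =>
      intro p q h
      rw [pow_zero]
      exact Matrix.one_apply_ne (fun e => by rw [e] at h; omega)
  | succ n ih =>
      intro p q h
      rw [pow_succ, Matrix.mul_apply]
      apply Finset.sum_eq_zero
      intro r _
      rcases le_or_gt (r:ℕ) ((p:ℕ)+n) with hr | hr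
      · have h0 : Jmat d r q = 0 := by
          rw [Jmat_apply, if_neg (by omega), if_neg (by omega)]
        rw [h0, mul_zero]
      · rw [ih p r (by omega), zero_mul]

lemma Jpow_super (d : ℕ) (j : ℕ) (k kj : Fin d) (h : (kj:ℕ) = (k:ℕ) + j) :
    (Jmat d ^ j) k kj = ∏ t ∈ range j, Real.sqrt ((((k:ℕ)+t+1 : ℕ) : ℝ)/2) := by
  induction j generalizing kj with
  | zero =>
      have : kj = k := Fin.ext (by omega)
      subst this
      rw [pow_zero, Matrix.one_apply_eq, Finset.prod_range_zero]
  | succ j ih =>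
      rw [pow_succ, Matrix.mul_apply]
      have hr0lt : (k:ℕ) + j < d := by have := kj.isLt; omega
      set r0 : Fin d := ⟨(k:ℕ)+j, hr0lt⟩ with hr0
      rw [Finset.sum_eq_single_of_mem r0 (Finset.mem_univ _) ?side]
      · rw [ih r0 rfl]
        have hJ : Jmat d r0 kj = Real.sqrt ((((k:ℕ)+j+1 : ℕ) : ℝ)/2) := by
          rw [Jmat_apply, if_pos (by show (k:ℕ)+j+1 = (kj:ℕ); omega)]
          congr 2
          rw [h]
          push_cast
          ring
        rw [hJ, Finset.prod_range_succ]
      case side =>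
        intro r _ hr
        rcases le_or_gt (r:ℕ) ((k:ℕ)+j) with hle | hlt
        · have hne : (r:ℕ) ≠ (k:ℕ)+j := fun e => hr (Fin.ext e)
          have h0 : Jmat d r kj = 0 := by
            rw [Jmat_apply, if_neg (by omega), if_neg (by omega)]
          rw [h0, mul_zero]
        · rw [Jpow_band d j k r (by omega), zero_mul]

instance finWFLT (m : ℕ) : WellFoundedLT (Fin m) := inferInstance

open Submodule InnerProductSpace in
lemma gram_det {E : Type*} [NormedAddCommGroup E] [InnerProductSpace ℝ E] {m : ℕ}
    (v : Fin m → E) :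
    (Matrix.of fun i j : Fin m => (inner ℝ (v i) (v j) : ℝ)).det
      = ∏ j, ‖gramSchmidt ℝ v j‖ ^ 2 := by
  set w : Fin m → E := fun i => gramSchmidt ℝ v i with hw
  set Cm : Matrix (Fin m) (Fin m) ℝ := Matrix.of (fun j i =>
    if i < j then (inner ℝ (w i) (v j) : ℝ) / (‖w i‖ : ℝ)^2 else if i = j then 1 else 0) with hCm
  have hCm_apply : ∀ j i, Cm j i =
      if i < j then (inner ℝ (w i) (v j) : ℝ) / (‖w i‖ : ℝ)^2 else if i = j then 1 else 0 :=
    fun j i => rfl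
  have hv : ∀ j, v j = ∑ i, Cm j i • w i := by
    intro j
    have hsplit : ∀ i : Fin m, Cm j i • w i
        = (if i < j then ((inner ℝ (w i) (v j) : ℝ) / (‖w i‖ : ℝ)^2) • w i else 0)
          + (if i = j then w i else 0) := by
      intro i
      rw [hCm_apply]
      rcases lt_trichotomy i j with h | h | h
      · rw [if_pos h, if_pos h, if_neg (ne_of_lt h), add_zero]
      · rw [if_neg (by simp [h]), if_pos h, if_pos h, if_neg (by simp [h]), one_smul, zero_add]
      · have h1 : ¬ i < j := by omega
        have h2 : ¬ i = j := by omega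
        simp only [if_neg h1, if_neg h2, zero_smul, add_zero]
    rw [Finset.sum_congr rfl (fun i _ => hsplit i), Finset.sum_add_distrib,
      Finset.sum_ite_eq' Finset.univ j, if_pos (Finset.mem_univ j)]
    rw [← Finset.sum_filter]
    have hIio : Finset.filter (· < j) Finset.univ = Finset.Iio j := by
      ext i; simp
    rw [hIio]
    rw [add_comm]
    simpa using gramSchmidt_def'' ℝ v j
  have hGram : (Matrix.of fun i j : Fin m => (inner ℝ (v i) (v j) : ℝ))
      = Cm * Matrix.diagonal (fun i => ‖w i‖^2) * Cm.transpose := by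
    ext j k
    have hrhs : (Cm * Matrix.diagonal (fun i => ‖w i‖^2) * Cm.transpose) j k
        = ∑ i, Cm j i * ‖w i‖^2 * Cm k i := by
      rw [Matrix.mul_apply]
      refine Finset.sum_congr rfl fun i _ => ?_
      rw [Matrix.mul_diagonal, Matrix.transpose_apply]
    rw [hrhs]
    show (inner ℝ (v j) (v k) : ℝ) = _
    rw [hv j, hv k, sum_inner]
    refine Finset.sum_congr rfl fun i _ => ?_
    rw [inner_sum]
    rw [Finset.sum_eq_single_of_mem i (Finset.mem_univ i) ?side]
    · rw [real_inner_smul_left, real_inner_smul_right, real_inner_self_eq_norm_sq]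
      ring
    case side =>
      intro i' _ hne
      rw [real_inner_smul_left, real_inner_smul_right,
        gramSchmidt_orthogonal ℝ v (Ne.symm hne)]
      ring
  have hdetC : Cm.det = 1 := by
    have htri : Cm.BlockTriangular OrderDual.toDual := by
      intro r c h
      have : r < c := h
      rw [hCm_apply, if_neg (by omega), if_neg (by omega)]
    rw [Matrix.det_of_lowerTriangular Cm htri]
    have : ∀ i : Fin m, Cm i i = 1 := fun i => by
      rw [hCm_apply, if_neg (lt_irrefl i), if_pos rfl]
    rw [Finset.prod_congr rfl (fun i _ => this i), Finset.prod_const_one]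
  rw [hGram, Matrix.det_mul, Matrix.det_mul, Matrix.det_transpose, hdetC,
    Matrix.det_diagonal, one_mul, mul_one]

open Submodule InnerProductSpace in
lemma gs_norm_lb {ι : Type*} [Fintype ι] [DecidableEq ι] {m : ℕ}
    (v : Fin m → EuclideanSpace ℝ ι) (j : Fin m) (s : Finset ι)
    (hz : ∀ i : Fin m, i < j → ∀ c ∈ s, v i c = 0) :
    ∑ c ∈ s, (v j c)^2 ≤ ‖gramSchmidt ℝ v j‖^2 := by
  set w : EuclideanSpace ℝ ι := gramSchmidt ℝ v j with hwj
  have hu : v j - w ∈ span ℝ (v '' Set.Iio j) := by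
    rw [hwj, gramSchmidt_def ℝ v j, sub_sub_cancel]
    apply Submodule.sum_mem
    intro i hi
    have hmem : (ℝ ∙ gramSchmidt ℝ v i).starProjection (v j)
        ∈ ℝ ∙ gramSchmidt ℝ v i := Submodule.starProjection_apply_mem _ _
    have hspan : (ℝ ∙ gramSchmidt ℝ v i) ≤ span ℝ (v '' Set.Iio j) := by
      rw [Submodule.span_singleton_le_iff_mem]
      have hx : gramSchmidt ℝ v i ∈ span ℝ (gramSchmidt ℝ v '' Set.Iio j) :=
        subset_span ⟨i, Finset.mem_Iio.mp hi, rfl⟩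
      rw [span_gramSchmidt_Iio ℝ v j] at hx
      exact hx
    exact hspan hmem
  have hzero : ∀ c ∈ s, (v j - w) c = 0 := by
    intro c hc
    refine Submodule.span_induction (p := fun x _ => x c = 0) ?_ rfl ?_ ?_ hu
    · rintro x ⟨i, hilt, rfl⟩
      exact hz i hilt c hc
    · intro x y hx hy px py
      show (x + y) c = 0
      have hxy : (x + y) c = x c + y c := rfl
      rw [hxy, px, py, add_zero]
    · intro a x hx px
      show (a • x) c = 0
      have hax : (a • x) c = a * x c := rfl
      rw [hax, px, mul_zero]
  have hexp : ‖w‖^2 = ∑ c, (w c)^2 := by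
    rw [← real_inner_self_eq_norm_sq, PiLp.inner_apply]
    refine Finset.sum_congr rfl fun c _ => ?_
    simp [RCLike.inner_apply, conj_trivial, sq]
  rw [hexp]
  have heq : ∀ c ∈ s, (v j c)^2 = (w c)^2 := by
    intro c hc
    have h0 := hzero c hc
    have : v j c - w c = 0 := h0
    have : w c = v j c := by linarith [this]
    rw [this]
  calc ∑ c ∈ s, (v j c)^2 = ∑ c ∈ s, (w c)^2 := Finset.sum_congr rfl heq
    _ ≤ ∑ c, (w c)^2 :=
        Finset.sum_le_sum_of_subset_of_nonneg (Finset.subset_univ s)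
          (fun c _ _ => sq_nonneg _)

/-- For `m ≤ d`, the Hankel determinant of power sums of the roots of the `d`-th
(physicists') Hermite polynomial is at least `1`. -/
theorem hermite_hankel_det_ge_one (d m : ℕ) (hm : m ≤ d)
    (l : Fin d → ℝ)
    (hroots : hermitePhys d =
      Polynomial.C ((2 : ℝ) ^ d) * ∏ i, (Polynomial.X - Polynomial.C (l i))) :
    1 ≤ Matrix.det (Matrix.of fun i j : Fin m => ∑ k, l k ^ ((i : ℕ) + (j : ℕ))) := by
  classical
  -- step 0 : the product over `l` equals the product over eigenvalues of the Jacobi matrix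
  have hprodeq : (∏ i, (X - C (l i)) : ℝ[X])
      = ∏ i, (X - C ((isHermitian_Jmat d).eigenvalues i)) := by
    have h1 : C ((2:ℝ)^d) * (∏ i, (X - C (l i)) : ℝ[X])
        = C ((2:ℝ)^d) * ∏ i, (X - C ((isHermitian_Jmat d).eigenvalues i)) := by
      rw [← hroots, hermitePhys_eq d, hermMonic_eq_prod_eig d]
    exact mul_left_cancel₀ (by simp) h1
  have hps : ∀ n, ∑ k, l k ^ n = (Jmat d ^ n).trace := powersum_eq_trace l hprodeq
  -- step 2 : the Hankel matrix is a Gram matrix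
  set v : Fin m → EuclideanSpace ℝ (Fin d × Fin d) :=
    fun i => WithLp.toLp 2 (fun c : Fin d × Fin d => (Jmat d ^ (i:ℕ)) c.1 c.2) with hv
  have hsymm : ∀ (n : ℕ) (p q : Fin d), (Jmat d ^ n) q p = (Jmat d ^ n) p q := by
    intro n p q
    have h := (isHermitian_Jmat d).pow n
    have := congrFun (congrFun h p) q
    rw [Matrix.conjTranspose_apply, star_trivial] at this
    exact this
  have hM : (Matrix.of fun i j : Fin m => ∑ k, l k ^ ((i : ℕ) + (j : ℕ)))
      = Matrix.of fun i j : Fin m => (inner ℝ (v i) (v j) : ℝ) := by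
    ext i j
    have hinner : (inner ℝ (v i) (v j) : ℝ)
        = ∑ p : Fin d, ∑ q : Fin d, (Jmat d ^ (i:ℕ)) p q * (Jmat d ^ (j:ℕ)) p q := by
      rw [PiLp.inner_apply]
      simp only [RCLike.inner_apply, conj_trivial]
      rw [Fintype.sum_prod_type]
      exact Finset.sum_congr rfl fun p _ => Finset.sum_congr rfl fun q _ => mul_comm _ _
    have htr : (Jmat d ^ ((i:ℕ)+(j:ℕ))).trace
        = ∑ p : Fin d, ∑ q : Fin d, (Jmat d ^ (i:ℕ)) p q * (Jmat d ^ (j:ℕ)) p q := by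
      rw [pow_add, Matrix.trace]
      refine Finset.sum_congr rfl fun p _ => ?_
      rw [Matrix.diag_apply, Matrix.mul_apply]
      exact Finset.sum_congr rfl fun q _ => by rw [hsymm (j:ℕ) p q]
    rw [Matrix.of_apply, Matrix.of_apply, hps ((i:ℕ)+(j:ℕ)), htr, hinner]
  -- step 5 : key coordinate lower bound for each Gram-Schmidt vector
  have key : ∀ j : Fin m,
      ((((j:ℕ).factorial * d.choose ((j:ℕ)+1) : ℕ)) : ℝ) / 2^(j:ℕ)
        ≤ ‖InnerProductSpace.gramSchmidt ℝ v j‖^2 := by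
    intro j
    have hjd : (j:ℕ) < d := lt_of_lt_of_le j.isLt hm
    set e : Fin (d - (j:ℕ)) → Fin d × Fin d := fun k =>
      (⟨(k:ℕ), by have := k.isLt; omega⟩, ⟨(k:ℕ)+(j:ℕ), by have := k.isLt; omega⟩) with he
    have hinj : Function.Injective e := by
      intro a b hab
      have : ((a:ℕ) : ℕ) = (b:ℕ) := congrArg (fun c => ((c.1 : Fin d) : ℕ)) hab
      exact Fin.ext this
    set s : Finset (Fin d × Fin d) := Finset.univ.image e with hs
    have hz : ∀ i : Fin m, i < j → ∀ c ∈ s, v i c = 0 := by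
      intro i hij c hc
      rw [hs, Finset.mem_image] at hc
      obtain ⟨k, _, rfl⟩ := hc
      show (Jmat d ^ (i:ℕ)) _ _ = 0
      apply Jpow_band
      show (k:ℕ) + (i:ℕ) < (k:ℕ) + (j:ℕ)
      have : (i:ℕ) < (j:ℕ) := hij
      omega
    have hb := gs_norm_lb v j s hz
    refine le_trans ?_ hb
    rw [hs, Finset.sum_image (fun a _ b _ hab => hinj hab)]
    have hterm : ∀ k : Fin (d - (j:ℕ)), (v j (e k))^2
        = (((((j:ℕ).factorial * (((k:ℕ) + (j:ℕ)).choose (j:ℕ)) : ℕ)) : ℝ) / 2^(j:ℕ)) := by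
      intro k
      have hsup : v j (e k) = ∏ t ∈ range (j:ℕ),
          Real.sqrt ((((k:ℕ)+t+1 : ℕ) : ℝ)/2) := by
        show (Jmat d ^ (j:ℕ)) _ _ = _
        exact Jpow_super d (j:ℕ) _ _ rfl
      rw [hsup, ← Finset.prod_pow]
      have : ∀ t ∈ range (j:ℕ),
          Real.sqrt ((((k:ℕ)+t+1 : ℕ) : ℝ)/2) ^ 2 = (((k:ℕ)+t+1 : ℕ) : ℝ)/2 := by
        intro t _
        rw [Real.sq_sqrt (by positivity)]
      rw [Finset.prod_congr rfl this, Finset.prod_div_distrib, Finset.prod_const,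
        Finset.card_range, ← Nat.cast_prod, prod_shift]
    rw [Finset.sum_congr rfl (fun k _ => hterm k)]
    rw [Fin.sum_univ_eq_sum_range
      (fun k => ((((j:ℕ).factorial * ((k + (j:ℕ)).choose (j:ℕ)) : ℕ)) : ℝ) / 2^(j:ℕ))
      (d - (j:ℕ))]
    have hnum : ∑ k ∈ range (d - (j:ℕ)), (j:ℕ).factorial * ((k + (j:ℕ)).choose (j:ℕ))
        = (j:ℕ).factorial * d.choose ((j:ℕ)+1) := by
      rw [← Finset.mul_sum, sum_choose_shift, Nat.sub_add_cancel (le_of_lt hjd)]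
    rw [← Finset.sum_div, ← Nat.cast_sum, hnum]
  -- step 6 : the arithmetic lower bound
  have harith : (1:ℝ) ≤ ∏ j : Fin m,
      ((((j:ℕ).factorial * d.choose ((j:ℕ)+1) : ℕ)) : ℝ) / 2^(j:ℕ) := by
    rw [Fin.prod_univ_eq_prod_range
      (fun j => (((j.factorial * d.choose (j+1) : ℕ)) : ℝ) / 2^j) m]
    have h1 : (1:ℝ) ≤ ∏ j ∈ range m, (((j.factorial * m.choose (j+1) : ℕ)) : ℝ) / 2^j := by
      rw [Finset.prod_div_distrib, Finset.prod_pow_eq_pow_sum, ← Nat.cast_prod]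
      rw [le_div_iff₀ (by positivity), one_mul]
      have := Pprod_ge m
      exact_mod_cast this
    refine le_trans h1 (Finset.prod_le_prod (fun j _ => by positivity) fun j hj => ?_)
    apply div_le_div_of_nonneg_right ?_ (by positivity)
    · exact_mod_cast Nat.mul_le_mul_left _ (Nat.choose_le_choose (j+1) hm)
  -- final chain
  rw [hM, gram_det v]
  refine le_trans harith (Finset.prod_le_prod (fun j _ => by positivity) fun j _ => key j)
end

section
/- For the coefficients b_{s,m} = c_{s,m}(2m), where ∑_{n≥0} c_{s,m}(n)yⁿ = (1+y)^{2s+2m+13/12}/(3+2y)^{m+1/2}, one has |b_{s,m}| ≤ √3 · √π · (5/2)^{2m} · Γ(2s + 2m + 13/12 + 1) / (2m)!. -/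
open Finset

open scoped Real

lemma aux_affine_rpow (c d p : ℝ) (n : ℕ) :
    ∀ x : ℝ, 0 < c + d * x →
      iteratedDeriv n (fun y : ℝ => (c + d * y) ^ p) x
        = d ^ n * (∏ i ∈ range n, (p - i)) * (c + d * x) ^ (p - n) := by
  induction n with
  | zero => intro x _; simp
  | succ n ih =>
    intro x hx
    rw [iteratedDeriv_succ]
    have hU : IsOpen {y : ℝ | 0 < c + d * y} := by
      have : Continuous fun y : ℝ => c + d * y := by continuity
      exact isOpen_lt continuous_const this
    have hev : iteratedDeriv n (fun y : ℝ => (c + d * y) ^ p)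
        =ᶠ[nhds x] fun y => d ^ n * (∏ i ∈ range n, (p - (i : ℝ))) * (c + d * y) ^ (p - n) := by
      filter_upwards [hU.mem_nhds hx] with y hy using ih y hy
    rw [hev.deriv_eq]
    have h2 : HasDerivAt (fun y : ℝ => c + d * y) d x := by
      simpa using ((hasDerivAt_id x).const_mul d).const_add c
    have h1 : HasDerivAt (fun y : ℝ => (c + d * y) ^ (p - n))
        ((p - n) * (c + d * x) ^ (p - n - 1) * d) x :=
      by have h1' := (Real.hasDerivAt_rpow_const (p := p - n) (Or.inl hx.ne')).comp x h2; exact h1'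
    rw [(h1.const_mul (d ^ n * ∏ i ∈ range n, (p - (i : ℝ)))).deriv]
    rw [prod_range_succ]
    have : p - (n : ℝ) - 1 = p - ((n : ℕ) + 1 : ℕ) := by push_cast; ring
    rw [← this]
    ring

lemma aux_itDW_open {f : ℝ → ℝ} {s : Set ℝ} (hs : IsOpen s) {x : ℝ} (hx : x ∈ s) (n : ℕ) :
    iteratedDerivWithin n f s x = iteratedDeriv n f x := by
  rw [iteratedDerivWithin_eq_iteratedFDerivWithin, iteratedDeriv_eq_iteratedFDeriv,
    iteratedFDerivWithin_of_isOpen n hs hx]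

-- factorial product

lemma aux_one_le_Gamma {x : ℝ} (hx : 2 ≤ x) : 1 ≤ Real.Gamma x := by
  rcases eq_or_lt_of_le hx with h | h
  · rw [← h, Real.Gamma_two]
  · rw [← Real.Gamma_two]
    exact (Real.Gamma_strictMonoOn_Ici (by norm_num) hx h).le

lemma aux_Gamma_prod (a : ℝ) : ∀ k : ℕ, (∀ l : ℕ, l < k → 0 < a - l) →
    Real.Gamma (a + 1) = Real.Gamma (a - k + 1) * ∏ l ∈ range k, (a - l) := by
  intro k
  induction k with
  | zero => simp
  | succ k ih =>
    intro h
    have hk : (0 : ℝ) < a - k := h k (Nat.lt_succ_self k)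
    have e1 : a - (k + 1 : ℕ) + 1 = a - k := by push_cast; ring
    rw [ih (fun l hl => h l (hl.trans (Nat.lt_succ_self k))), prod_range_succ, e1,
      show a - (k:ℝ) + 1 = (a - k) + 1 by ring, Real.Gamma_add_one hk.ne']
    ring

lemma aux_P_bound (a : ℝ) (n : ℕ) (h : ∀ l : ℕ, l < n → ((n - l : ℕ) : ℝ) + 1 ≤ a - l)
    (hpos : ∀ l : ℕ, l < n → 0 < a - l) :
    ∀ j : ℕ, j ≤ n → (∏ l ∈ range (n - j), (a - l)) * (Nat.factorial (j + 1)) ≤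
      ∏ l ∈ range n, (a - l) := by
  intro j
  induction j with
  | zero => intro _; simp
  | succ j ih =>
    intro hj
    have hj' : j ≤ n := (Nat.le_succ j).trans hj
    have e1 : n - j = (n - (j + 1)) + 1 := by omega
    have hP : (0:ℝ) < ∏ l ∈ range (n - (j+1)), (a - l) :=
      Finset.prod_pos fun l hl => hpos l (by simp at hl; omega)
    have hfac : ((n - (n - (j+1)) : ℕ) : ℝ) = (j : ℝ) + 1 := by
      have : n - (n - (j+1)) = j + 1 := by omega
      rw [this]; push_cast; ring
    have hfactor : (j : ℝ) + 2 ≤ a - (n - (j+1) : ℕ) := by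
      have := h (n - (j+1)) (by omega)
      rw [hfac] at this; linarith
    calc (∏ l ∈ range (n - (j+1)), (a - l)) * (Nat.factorial (j + 2))
        = (∏ l ∈ range (n - (j+1)), (a - l)) * (((j:ℝ) + 2) * Nat.factorial (j + 1)) := by
          rw [Nat.factorial_succ (j+1)]; push_cast; ring
      _ ≤ (∏ l ∈ range (n - (j+1)), (a - l)) * ((a - (n - (j+1) : ℕ)) * Nat.factorial (j + 1)) := by
          apply mul_le_mul_of_nonneg_left _ hP.le
          exact mul_le_mul_of_nonneg_right hfactor (by positivity)
      _ = (∏ l ∈ range (n - j), (a - l)) * (Nat.factorial (j + 1)) := by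
          rw [e1, prod_range_succ]; ring
      _ ≤ ∏ l ∈ range n, (a - l) := ih hj'

lemma aux_fact_prod (m : ℕ) : ∀ k : ℕ,
    (Nat.factorial m : ℝ) * ∏ l ∈ range k, ((m : ℝ) + 1 + l) = Nat.factorial (m + k) := by
  intro k
  induction k with
  | zero => simp
  | succ k ih =>
    rw [prod_range_succ, ← mul_assoc, ih]
    show _ = (Nat.factorial (m + k + 1) : ℝ)
    rw [Nat.factorial_succ]
    push_cast
    ring

/-- For the coefficients `b_{s,m} = c_{s,m}(2m)`, where
`∑ c_{s,m}(n) yⁿ = (1+y)^{2s+2m+13/12}/(3+2y)^{m+1/2}` (so `(2m)!·c_{s,m}(2m)`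
is the `2m`-th derivative at `0` of this function), one has
`|b_{s,m}| ≤ √3·√π·(5/2)^{2m}·Γ(2s+2m+13/12+1)/(2m)!`. -/
theorem b_coeff_bound (s m : ℕ) :
    |iteratedDeriv (2 * m)
        (fun y : ℝ => (1 + y) ^ (2 * (s : ℝ) + 2 * (m : ℝ) + 13 / 12) /
          (3 + 2 * y) ^ ((m : ℝ) + 1 / 2)) 0 / (Nat.factorial (2 * m))| ≤
      Real.sqrt 3 * Real.sqrt π * (5 / 2) ^ (2 * m) *
        Real.Gamma (2 * (s : ℝ) + 2 * (m : ℝ) + 13 / 12 + 1) /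
        (Nat.factorial (2 * m)) := by
  set n := 2 * m with hn
  set a : ℝ := 2 * (s : ℝ) + 2 * (m : ℝ) + 13 / 12 with ha
  set b : ℝ := (m : ℝ) + 1 / 2 with hb
  set G : ℝ := Real.Gamma (a + 1) with hG
  rw [abs_div, Nat.abs_cast]
  apply div_le_div_of_nonneg_right ?_ (by positivity)
  set s0 : Set ℝ := Set.Ioo (-(1:ℝ)/2) (1/2) with hs0
  have hs0o : IsOpen s0 := isOpen_Ioo
  have h0 : (0:ℝ) ∈ s0 := by constructor <;> norm_num
  have hu : UniqueDiffOn ℝ s0 := hs0o.uniqueDiffOn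
  have h1y : ∀ y ∈ s0, (0:ℝ) < 1 + y := fun y hy => by
    have := hy.1; linarith
  have h3y : ∀ y ∈ s0, (0:ℝ) < 3 + 2 * y := fun y hy => by
    have := hy.1; linarith
  set g : ℝ → ℝ := fun y => (1 + y) ^ a with hg
  set h : ℝ → ℝ := fun y => (3 + 2 * y) ^ (-b) with hh
  have hEq : Set.EqOn (fun y : ℝ => (1 + y) ^ a / (3 + 2 * y) ^ b)
      (fun y => g y * h y) s0 := by
    intro y hy
    simp only [hg, hh]
    rw [Real.rpow_neg (h3y y hy).le, div_eq_mul_inv]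
  have hcg : ContDiffOn ℝ (n : WithTop ℕ∞) g s0 := by
    intro y hy
    apply ContDiffAt.contDiffWithinAt
    have houter : ContDiffAt ℝ (n : WithTop ℕ∞) (fun t : ℝ => t ^ a) (1 + y) :=
      Real.contDiffAt_rpow_const_of_ne (h1y y hy).ne'
    have hinner : ContDiffAt ℝ (n : WithTop ℕ∞) (fun y : ℝ => 1 + y) y :=
      (contDiff_const.add contDiff_id).contDiffAt
    exact houter.comp y hinner
  have hch : ContDiffOn ℝ (n : WithTop ℕ∞) h s0 := by
    intro y hy
    apply ContDiffAt.contDiffWithinAt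
    have houter : ContDiffAt ℝ (n : WithTop ℕ∞) (fun t : ℝ => t ^ (-b)) (3 + 2 * y) :=
      Real.contDiffAt_rpow_const_of_ne (h3y y hy).ne'
    have hinner : ContDiffAt ℝ (n : WithTop ℕ∞) (fun y : ℝ => 3 + 2 * y) y :=
      (contDiff_const.add (contDiff_const.mul contDiff_id)).contDiffAt
    exact houter.comp y hinner
  have e1 : iteratedDeriv n (fun y : ℝ => (1 + y) ^ a / (3 + 2 * y) ^ b) 0
      = iteratedDerivWithin n (fun y => g y * h y) s0 0 := by
    rw [← aux_itDW_open hs0o h0 n]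
    exact iteratedDerivWithin_congr hEq h0
  rw [e1, ← Real.norm_eq_abs, ← norm_iteratedFDerivWithin_eq_norm_iteratedDerivWithin]
  refine le_trans (norm_iteratedFDerivWithin_mul_le hcg hch hu h0 le_rfl) ?_
  -- basic positivity facts
  have hn2 : ((n:ℕ):ℝ) = 2 * (m:ℝ) := by rw [hn]; push_cast; ring
  have hs' : (0:ℝ) ≤ (s:ℝ) := Nat.cast_nonneg s
  have hal : ∀ l : ℕ, l < n → 0 < a - l := by
    intro l hl
    have h1 : (l:ℝ) < (n:ℝ) := by exact_mod_cast hl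
    rw [hn2] at h1; rw [ha]; linarith
  have hterm : ∀ l : ℕ, l < n → ((n - l : ℕ) : ℝ) + 1 ≤ a - l := by
    intro l hl
    rw [Nat.cast_sub hl.le, hn2, ha]
    have h1 : (l:ℝ) < (n:ℝ) := by exact_mod_cast hl
    linarith
  have hGpos : 0 < G := Real.Gamma_pos_of_pos (by rw [ha]; linarith)
  have hPn : (∏ l ∈ range n, (a - l)) ≤ G := by
    have hgam := aux_Gamma_prod a n hal
    have h1 : (1:ℝ) ≤ Real.Gamma (a - n + 1) := by
      apply aux_one_le_Gamma
      rw [ha, hn2]; linarith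
    have h2 : (0:ℝ) ≤ ∏ l ∈ range n, (a - l) :=
      prod_nonneg fun l hl => (hal l (mem_range.mp hl)).le
    rw [hG, hgam]
    nlinarith
  -- norm computations
  have hgnorm : ∀ i : ℕ, i ≤ n → ‖iteratedFDerivWithin ℝ i g s0 0‖
      = ∏ l ∈ range i, (a - l) := by
    intro i hi
    rw [norm_iteratedFDerivWithin_eq_norm_iteratedDerivWithin, aux_itDW_open hs0o h0,
      Real.norm_eq_abs]
    have hgeq : g = fun y : ℝ => (1 + 1 * y) ^ a := by funext y; rw [one_mul]
    rw [hgeq, aux_affine_rpow 1 1 a i 0 (by norm_num)]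
    rw [show (1:ℝ) + 1 * 0 = 1 by norm_num, Real.one_rpow, one_pow, one_mul, mul_one]
    exact abs_of_nonneg (prod_nonneg fun l hl =>
      (hal l (lt_of_lt_of_le (mem_range.mp hl) hi)).le)
  have hbl : ∀ l : ℕ, (0:ℝ) < b + l := by
    intro l; rw [hb]; positivity
  have hhnorm : ∀ k : ℕ, ‖iteratedFDerivWithin ℝ k h s0 0‖
      = 2 ^ k * (∏ l ∈ range k, (b + l)) * (3:ℝ) ^ (-b - (k:ℝ)) := by
    intro k
    rw [norm_iteratedFDerivWithin_eq_norm_iteratedDerivWithin, aux_itDW_open hs0o h0,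
      Real.norm_eq_abs, hh, aux_affine_rpow 3 2 (-b) k 0 (by norm_num)]
    rw [show (3:ℝ) + 2 * 0 = 3 by norm_num]
    rw [abs_mul, abs_mul, abs_of_nonneg (by positivity : (0:ℝ) ≤ (2:ℝ)^k),
      abs_of_nonneg (Real.rpow_nonneg (by norm_num) _), Finset.abs_prod]
    congr 1
    congr 1
    apply prod_congr rfl
    intro l _
    rw [show -b - (l:ℝ) = -(b + l) by ring, abs_neg, abs_of_pos (hbl l)]
  -- termwise bound
  have hRk : ∀ k : ℕ, (2:ℝ)^k * (3:ℝ)^(-b - (k:ℝ)) = (3:ℝ)^(-b) * (2/3:ℝ)^k := by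
    intro k
    rw [show -b - (k:ℝ) = -b + (-(k:ℝ)) by ring, Real.rpow_add (by norm_num : (0:ℝ) < 3),
      Real.rpow_neg (by norm_num : (0:ℝ) ≤ 3) ((k:ℝ)), Real.rpow_natCast, div_pow]
    have h3k : ((3:ℝ)^k) ≠ 0 := by positivity
    field_simp
  have hB : ∀ i ∈ range (n + 1), (n.choose i : ℝ) * ‖iteratedFDerivWithin ℝ i g s0 0‖ *
        ‖iteratedFDerivWithin ℝ (n - i) h s0 0‖ ≤
      G * 2^n * (3:ℝ)^(-b) * ((Nat.choose (3*m) (n-i) : ℝ) * (2/3:ℝ)^(n-i)) := by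
    intro i hi
    have hi' : i ≤ n := Nat.lt_succ_iff.mp (mem_range.mp hi)
    rw [hgnorm i hi', hhnorm (n - i)]
    set k := n - i with hk
    set Pi := ∏ l ∈ range i, (a - l) with hPidef
    set Qk := ∏ l ∈ range k, (b + l) with hQdef
    have hPi0 : 0 ≤ Pi := prod_nonneg fun l hl =>
      (hal l (lt_of_lt_of_le (mem_range.mp hl) hi')).le
    have hQ0 : 0 ≤ Qk := prod_nonneg fun l _ => (hbl l).le
    -- P i * (k+1)! ≤ G
    have hPiG : Pi * (Nat.factorial (k+1) : ℝ) ≤ G := by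
      have := aux_P_bound a n hterm hal k (Nat.sub_le n i)
      rw [show n - k = i by omega] at this
      exact le_trans this hPn
    have hPik : Pi * (Nat.factorial k : ℝ) ≤ G := by
      refine le_trans ?_ hPiG
      apply mul_le_mul_of_nonneg_left _ hPi0
      exact_mod_cast Nat.factorial_le (Nat.le_succ k)
    -- Q k ≤ C(3m,k) * k!
    have hQk : Qk ≤ (Nat.choose (3*m) k : ℝ) * (Nat.factorial k : ℝ) := by
      have hkm : k ≤ 2 * m := by omega
      have h1 : Qk ≤ ∏ l ∈ range k, ((m:ℝ) + 1 + l) := by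
        apply prod_le_prod (fun l _ => (hbl l).le)
        intro l _; rw [hb]; norm_num
      have h2 : (Nat.factorial m : ℝ) * ∏ l ∈ range k, ((m:ℝ) + 1 + l)
          = Nat.factorial (m + k) := aux_fact_prod m k
      have h3 : Nat.factorial (m + k) = Nat.choose (m+k) k * Nat.factorial k *
          Nat.factorial m := by
        rw [← Nat.choose_mul_factorial_mul_factorial (Nat.le_add_left k m)]
        congr 2
        omega
      have h4 : Nat.choose (m+k) k ≤ Nat.choose (3*m) k :=
        Nat.choose_le_choose k (by omega)
      have hm0 : (0:ℝ) < Nat.factorial m := by positivity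
      have h5 : (Nat.factorial m : ℝ) * Qk ≤
          (Nat.factorial m : ℝ) * ((Nat.choose (3*m) k : ℝ) * Nat.factorial k) := by
        calc (Nat.factorial m : ℝ) * Qk ≤ (Nat.factorial m : ℝ) *
              ∏ l ∈ range k, ((m:ℝ) + 1 + l) := by
              exact mul_le_mul_of_nonneg_left h1 (by positivity)
          _ = (Nat.factorial (m+k) : ℝ) := h2
          _ = (Nat.choose (m+k) k : ℝ) * Nat.factorial k * Nat.factorial m := by
              rw [h3]; push_cast; ring
          _ ≤ (Nat.choose (3*m) k : ℝ) * Nat.factorial k * Nat.factorial m := by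
              have : (Nat.choose (m+k) k : ℝ) ≤ Nat.choose (3*m) k := by exact_mod_cast h4
              apply mul_le_mul_of_nonneg_right _ (by positivity)
              exact mul_le_mul_of_nonneg_right this (by positivity)
          _ = (Nat.factorial m : ℝ) * ((Nat.choose (3*m) k : ℝ) * Nat.factorial k) := by ring
      exact le_of_mul_le_mul_left h5 hm0
    have hCn : (n.choose i : ℝ) ≤ (2:ℝ)^n := by
      have : n.choose i ≤ 2^n := by
        calc n.choose i ≤ ∑ j ∈ range (n+1), n.choose j :=
              single_le_sum (fun j _ => Nat.zero_le _) hi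
          _ = 2^n := Nat.sum_range_choose n
      exact_mod_cast this
    have hPiQk : Pi * Qk ≤ G * (Nat.choose (3*m) k : ℝ) := by
      calc Pi * Qk ≤ Pi * ((Nat.choose (3*m) k : ℝ) * Nat.factorial k) :=
            mul_le_mul_of_nonneg_left hQk hPi0
        _ = (Nat.choose (3*m) k : ℝ) * (Pi * Nat.factorial k) := by ring
        _ ≤ (Nat.choose (3*m) k : ℝ) * G := mul_le_mul_of_nonneg_left hPik (by positivity)
        _ = G * (Nat.choose (3*m) k : ℝ) := by ring
    have hR0 : (0:ℝ) < (3:ℝ)^(-b - (k:ℝ)) := Real.rpow_pos_of_pos (by norm_num) _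
    calc (n.choose i : ℝ) * Pi * (2^k * Qk * (3:ℝ)^(-b - (k:ℝ)))
        = (n.choose i : ℝ) * ((Pi * Qk) * (2^k * (3:ℝ)^(-b - (k:ℝ)))) := by ring
      _ ≤ (2:ℝ)^n * ((G * (Nat.choose (3*m) k : ℝ)) * (2^k * (3:ℝ)^(-b - (k:ℝ)))) := by
          apply mul_le_mul hCn _ _ (by positivity)
          · exact mul_le_mul_of_nonneg_right hPiQk (by positivity)
          · apply mul_nonneg (mul_nonneg hPi0 hQ0) (by positivity)
      _ = G * 2^n * ((Nat.choose (3*m) k : ℝ) * (2^k * (3:ℝ)^(-b - (k:ℝ)))) := by ring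
      _ = G * 2^n * (3:ℝ)^(-b) * ((Nat.choose (3*m) k : ℝ) * (2/3:ℝ)^k) := by
          rw [hRk k]; ring
  refine le_trans (Finset.sum_le_sum hB) ?_
  rw [← Finset.mul_sum]
  have hreflect : ∑ i ∈ range (n+1), ((Nat.choose (3*m) (n-i) : ℝ) * (2/3:ℝ)^(n-i))
      = ∑ k ∈ range (n+1), ((Nat.choose (3*m) k : ℝ) * (2/3:ℝ)^k) := by
    have := Finset.sum_range_reflect (fun k => ((Nat.choose (3*m) k : ℝ) * (2/3:ℝ)^k)) (n+1)
    simpa using this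
  rw [hreflect]
  have hsum : ∑ k ∈ range (n+1), ((Nat.choose (3*m) k : ℝ) * (2/3:ℝ)^k)
      ≤ (5/3:ℝ)^(3*m) := by
    calc ∑ k ∈ range (n+1), ((Nat.choose (3*m) k : ℝ) * (2/3:ℝ)^k)
        ≤ ∑ k ∈ range (3*m+1), ((Nat.choose (3*m) k : ℝ) * (2/3:ℝ)^k) := by
          apply Finset.sum_le_sum_of_subset_of_nonneg
          · apply range_subset_range.mpr; omega
          · intro k _ _; positivity
      _ = ((2:ℝ)/3 + 1)^(3*m) := by
          rw [add_pow]
          apply sum_congr rfl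
          intro k _
          rw [one_pow]; ring
      _ = (5/3:ℝ)^(3*m) := by norm_num
  have hS0 : (0:ℝ) ≤ ∑ k ∈ range (n+1), ((Nat.choose (3*m) k : ℝ) * (2/3:ℝ)^k) := by
    apply Finset.sum_nonneg; intro k _; positivity
  have h3b : (3:ℝ)^(-b) ≤ ((1:ℝ)/3)^m := by
    have h2 : (3:ℝ)^(-((m:ℕ):ℝ)) = ((1:ℝ)/3)^m := by
      rw [Real.rpow_neg (by norm_num : (0:ℝ) ≤ 3) (((m:ℕ)):ℝ), Real.rpow_natCast, one_div,
        inv_pow]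
    rw [← h2]
    exact Real.rpow_le_rpow_of_exponent_le (by norm_num) (by rw [hb]; linarith)
  have h3b0 : (0:ℝ) ≤ (3:ℝ)^(-b) := Real.rpow_nonneg (by norm_num) _
  have hfinal : (2:ℝ)^n * (((1:ℝ)/3)^m * (5/3:ℝ)^(3*m)) ≤ Real.sqrt 3 * Real.sqrt π *
      (5/2:ℝ)^n := by
    have e2 : (2:ℝ)^n = (4:ℝ)^m := by rw [hn, pow_mul]; norm_num
    have e4 : (5/2:ℝ)^n = (25/4:ℝ)^m := by rw [hn, pow_mul]; norm_num
    have e3 : (5/3:ℝ)^(3*m) = (125/27:ℝ)^m := by rw [pow_mul]; norm_num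
    rw [e2, e3, e4]
    have e5 : (4:ℝ)^m * (((1:ℝ)/3)^m * (125/27:ℝ)^m) = (500/81:ℝ)^m := by
      rw [← mul_pow, ← mul_pow]; norm_num
    rw [e5]
    have h6 : (500/81:ℝ)^m ≤ (25/4:ℝ)^m :=
      pow_le_pow_left₀ (by norm_num) (by norm_num) m
    have a1 : (1:ℝ) ≤ Real.sqrt 3 := by
      rw [show (1:ℝ) = Real.sqrt 1 from (Real.sqrt_one).symm]
      exact Real.sqrt_le_sqrt (by norm_num)
    have a2 : (1:ℝ) ≤ Real.sqrt π := by
      rw [show (1:ℝ) = Real.sqrt 1 from (Real.sqrt_one).symm]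
      exact Real.sqrt_le_sqrt (by linarith [Real.pi_gt_three])
    have a3 : (1:ℝ) ≤ Real.sqrt 3 * Real.sqrt π := by nlinarith
    calc (500/81:ℝ)^m ≤ (25/4:ℝ)^m := h6
      _ = 1 * (25/4:ℝ)^m := by ring
      _ ≤ Real.sqrt 3 * Real.sqrt π * (25/4:ℝ)^m :=
          mul_le_mul_of_nonneg_right a3 (pow_nonneg (by norm_num) m)
  have step1 : G * 2^n * (3:ℝ)^(-b) * (∑ k ∈ range (n+1),
        ((Nat.choose (3*m) k : ℝ) * (2/3:ℝ)^k))
      ≤ G * 2^n * (((1:ℝ)/3)^m * (5/3:ℝ)^(3*m)) := by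
    have hmm := mul_le_mul h3b hsum hS0 (by positivity : (0:ℝ) ≤ ((1:ℝ)/3)^m)
    calc G * 2^n * (3:ℝ)^(-b) * (∑ k ∈ range (n+1), ((Nat.choose (3*m) k : ℝ) * (2/3:ℝ)^k))
        = G * 2^n * ((3:ℝ)^(-b) * ∑ k ∈ range (n+1),
            ((Nat.choose (3*m) k : ℝ) * (2/3:ℝ)^k)) := by ring
      _ ≤ G * 2^n * (((1:ℝ)/3)^m * (5/3:ℝ)^(3*m)) :=
          mul_le_mul_of_nonneg_left hmm (by positivity)
  refine le_trans step1 ?_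
  calc G * 2^n * (((1:ℝ)/3)^m * (5/3:ℝ)^(3*m))
      = G * ((2:ℝ)^n * (((1:ℝ)/3)^m * (5/3:ℝ)^(3*m))) := by ring
    _ ≤ G * (Real.sqrt 3 * Real.sqrt π * (5/2:ℝ)^n) :=
        mul_le_mul_of_nonneg_left hfinal hGpos.le
    _ = Real.sqrt 3 * Real.sqrt π * (5/2:ℝ)^n * G := by ring
end

section
/- Let v = v(t) be defined implicitly by t² = 3 - 2v - v^{-2} on the curve parameterized by v = x ± √(√x - x²), x ∈ [0,1]. Then along this curve: |v| ≤ 1, 1 ≤ |2v+1| ≤ 3, and 0.9621 ≤ |v²+v+1| ≤ 3. -/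
/-!
Put `s = √x ∈ [0, 1]`. A point `v` of the curve has `Re v = s²` and `(Im v)² = s - s⁴`, so
`|v|² = s`, `|2v + 1|² = (2s + 1)²` and `|v² + v + 1|² = 4s⁴ + 2s³ + 3s² - s + 1`.
All bounds then reduce to bounds on these polynomials in `s ∈ [0, 1]`.
-/

open Complex

lemma re_eq_and_im_sq_eq_of_mem_curve {x : ℝ} (hx : x ∈ Set.Icc (0 : ℝ) 1) {v : ℂ}
    (hv : v = (x : ℂ) + I * (√(√x - x ^ 2) : ℝ) ∨ v = (x : ℂ) - I * (√(√x - x ^ 2) : ℝ)) :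
    v.re = √x ^ 2 ∧ v.im ^ 2 = √x - √x ^ 4 := by
  obtain ⟨hx0, hx1⟩ := hx
  have hsq : √x ^ 2 = x := Real.sq_sqrt hx0
  have hs0 : 0 ≤ √x := Real.sqrt_nonneg x
  have hs1 : √x ≤ 1 := Real.sqrt_le_one.2 hx1
  have h4 : x ^ 2 = √x ^ 4 := by rw [show √x ^ 4 = (√x ^ 2) ^ 2 by ring, hsq]
  have hrad : 0 ≤ √x - x ^ 2 := by
    rw [h4]
    nlinarith [pow_le_one₀ hs0 hs1 (n := 3)]
  have him : v.im ^ 2 = √x - x ^ 2 := by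
    rcases hv with rfl | rfl <;> simp [Real.sq_sqrt hrad]
  refine ⟨?_, ?_⟩
  · rcases hv with rfl | rfl <;> simp [hsq]
  · rw [him, h4]

section

variable {s : ℝ} {v : ℂ} (hre : v.re = s ^ 2) (him : v.im ^ 2 = s - s ^ 4)
include hre him

lemma sq_norm_eq : ‖v‖ ^ 2 = s := by
  rw [Complex.sq_norm, normSq_apply, hre]
  linear_combination him

lemma norm_two_mul_add_one_eq (hs : 0 ≤ s) : ‖2 * v + 1‖ = 2 * s + 1 := by
  rw [← sq_eq_sq₀ (norm_nonneg _) (by positivity), Complex.sq_norm, normSq_apply]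
  simp only [add_re, add_im, mul_re, mul_im, re_ofNat, im_ofNat, one_re, one_im, hre]
  linear_combination 4 * him

lemma sq_norm_sq_add_self_add_one :
    ‖v ^ 2 + v + 1‖ ^ 2 = 4 * s ^ 4 + 2 * s ^ 3 + 3 * s ^ 2 - s + 1 := by
  rw [Complex.sq_norm, normSq_apply]
  simp only [pow_two, add_re, add_im, mul_re, mul_im, one_re, one_im, hre]
  linear_combination (v.im ^ 2 + s - s ^ 4 - 2 * (s ^ 4 + s ^ 2 + 1) + (2 * s ^ 2 + 1) ^ 2) * him

end

/-- The quartic attains its minimum `≈ 0.92583 = 0.96220…²` near `s = 0.14`. -/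
lemma quartic_lower_bound (s : ℝ) :
    (0.9621 : ℝ) ^ 2 ≤ 4 * s ^ 4 + 2 * s ^ 3 + 3 * s ^ 2 - s + 1 := by
  nlinarith [sq_nonneg (s - 0.14), sq_nonneg (s ^ 2 - 0.14 * s), sq_nonneg (2 * s ^ 2 + s - 0.3),
    sq_nonneg (s ^ 2 - 0.0196), sq_nonneg (s + 0.3)]

lemma quartic_upper_bound {s : ℝ} (h0 : 0 ≤ s) (h1 : s ≤ 1) :
    4 * s ^ 4 + 2 * s ^ 3 + 3 * s ^ 2 - s + 1 ≤ 3 ^ 2 := by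
  nlinarith [pow_le_one₀ h0 h1 (n := 2), pow_le_one₀ h0 h1 (n := 3), pow_le_one₀ h0 h1 (n := 4)]

/-- On the curve `v = x ± i√(√x - x²)`, `x ∈ [0,1]` (the curve defined by
`t² = 3 - 2v - v⁻²`), one has `|v| ≤ 1`, `1 ≤ |2v+1| ≤ 3` and
`0.9621 ≤ |v²+v+1| ≤ 3`. -/
theorem curve_bounds (x : ℝ) (hx : x ∈ Set.Icc (0 : ℝ) 1) (v : ℂ)
    (hv : v = (x : ℂ) + Complex.I * (Real.sqrt (Real.sqrt x - x ^ 2) : ℝ) ∨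
          v = (x : ℂ) - Complex.I * (Real.sqrt (Real.sqrt x - x ^ 2) : ℝ)) :
    ‖v‖ ≤ 1 ∧
    1 ≤ ‖2 * v + 1‖ ∧ ‖2 * v + 1‖ ≤ 3 ∧
    0.9621 ≤ ‖v ^ 2 + v + 1‖ ∧ ‖v ^ 2 + v + 1‖ ≤ 3 := by
  obtain ⟨hre, him⟩ := re_eq_and_im_sq_eq_of_mem_curve hx hv
  set s := √x
  have hs0 : 0 ≤ s := Real.sqrt_nonneg x
  have hs1 : s ≤ 1 := Real.sqrt_le_one.2 hx.2
  have hw := sq_norm_sq_add_self_add_one hre him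
  rw [norm_two_mul_add_one_eq hre him hs0]
  refine ⟨(sq_le_one_iff₀ (norm_nonneg v)).1 ((sq_norm_eq hre him).trans_le hs1),
    by linarith, by linarith, ?_, ?_⟩
  · rw [← pow_le_pow_iff_left₀ (by norm_num) (norm_nonneg _) two_ne_zero, hw]
    exact quartic_lower_bound s
  · rw [← pow_le_pow_iff_left₀ (norm_nonneg _) (by norm_num) two_ne_zero, hw]
    exact quartic_upper_bound hs0 hs1
end

section
/- With α_s := 2Γ(2s+2)ζ(2s)ζ(2s+2)/(s·(2π)^{4s+2}), the sequence α_s is increasing for s ≥ 22, i.e., α_{s+1} ≥ α_s for all s ≥ 22. -/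
open scoped Real

noncomputable def S (k : ℕ) : ℝ := ∑' n : ℕ, 1 / (n : ℝ) ^ k

lemma S_summable {k : ℕ} (hk : 1 < k) : Summable (fun n : ℕ => 1 / (n : ℝ) ^ k) :=
  Real.summable_one_div_nat_pow.mpr hk

lemma zeta_re_eq {k : ℕ} (hk : 1 < k) : (riemannZeta k).re = S k := by
  rw [zeta_nat_eq_tsum_of_gt_one hk]
  have : (∑' n : ℕ, 1 / ((n : ℂ)) ^ k) = ((S k : ℝ) : ℂ) := by
    rw [S, Complex.ofReal_tsum]
    refine tsum_congr fun n => ?_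
    push_cast
    ring
  rw [this, Complex.ofReal_re]

lemma one_le_S {k : ℕ} (hk : 1 < k) : 1 ≤ S k := by
  have h := Summable.le_tsum (S_summable hk) 1 (fun j _ => by positivity)
  refine le_trans (le_of_eq ?_) h
  norm_num

lemma S_split {k : ℕ} (hk : 2 ≤ k) : S k = 1 + ∑' n : ℕ, 1 / ((n : ℝ) + 2) ^ k := by
  have hsum := S_summable (show 1 < k by omega)
  have hsum1 : Summable (fun n : ℕ => 1 / ((n : ℝ) + 1) ^ k) := by
    have := (summable_nat_add_iff 1).mpr hsum
    refine this.congr fun n => ?_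
    push_cast; ring_nf
  have e0 : S k = ∑' n : ℕ, 1 / (((n + 1 : ℕ)) : ℝ) ^ k := by
    rw [S, Summable.tsum_eq_zero_add hsum]
    simp [zero_pow (show k ≠ 0 by omega)]
  have e1 : (fun n : ℕ => 1 / (((n + 1 : ℕ)) : ℝ) ^ k) = fun n : ℕ => 1 / ((n : ℝ) + 1) ^ k := by
    funext n; push_cast; ring
  rw [e0, e1, Summable.tsum_eq_zero_add hsum1]
  have e2 : ∑' n : ℕ, 1 / (((n + 1 : ℕ) : ℝ) + 1) ^ k = ∑' n : ℕ, 1 / ((n : ℝ) + 2) ^ k :=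
    tsum_congr fun n => by push_cast; ring
  rw [e2]
  norm_num

lemma S_le {k : ℕ} (hk : 2 ≤ k) : S k ≤ 1 + 4 / 2 ^ k := by
  have hsum := S_summable (show 1 < k by omega)
  have hsum2 : Summable (fun n : ℕ => 1 / ((n : ℝ) + 2) ^ k) := by
    have := (summable_nat_add_iff 2).mpr hsum
    refine this.congr fun n => ?_
    push_cast; ring_nf
  have hsum2' : Summable (fun n : ℕ => 1 / ((n : ℝ) + 2) ^ 2) := by
    have := (summable_nat_add_iff 2).mpr (S_summable one_lt_two)
    refine this.congr fun n => ?_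
    push_cast; ring_nf
  rw [S_split hk]
  have hterm : ∀ n : ℕ, 1 / ((n : ℝ) + 2) ^ k ≤ (4 / 2 ^ k) * (1 / ((n : ℝ) + 2) ^ 2) := by
    intro n
    have h2 : (2 : ℝ) ≤ (n : ℝ) + 2 := by
      have := Nat.cast_nonneg (α := ℝ) n
      linarith
    have hpow : (2 : ℝ) ^ (k - 2) * ((n : ℝ) + 2) ^ 2 ≤ ((n : ℝ) + 2) ^ k := by
      calc (2 : ℝ) ^ (k - 2) * ((n : ℝ) + 2) ^ 2
          ≤ ((n : ℝ) + 2) ^ (k - 2) * ((n : ℝ) + 2) ^ 2 := by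
            gcongr <;> linarith
        _ = ((n : ℝ) + 2) ^ k := by
            rw [← pow_add]
            congr 1
            omega
    have h2k : (2 : ℝ) ^ k = 4 * 2 ^ (k - 2) := by
      calc (2 : ℝ) ^ k = 2 ^ (2 + (k - 2)) := by congr 1; omega
        _ = 4 * 2 ^ (k - 2) := by rw [pow_add]; norm_num
    rw [div_mul_div_comm, mul_one, div_le_div_iff₀ (by positivity) (by positivity)]
    nlinarith [hpow, h2k, sq_nonneg ((n : ℝ) + 2)]
  have htail : ∑' n : ℕ, 1 / ((n : ℝ) + 2) ^ k ≤ ∑' n : ℕ, (4 / 2 ^ k) * (1 / ((n : ℝ) + 2) ^ 2) :=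
    Summable.tsum_le_tsum hterm hsum2 (hsum2'.mul_left _)
  have htail2 : ∑' n : ℕ, 1 / ((n : ℝ) + 2) ^ 2 ≤ 1 := by
    have hS2 : S 2 = π ^ 2 / 6 := hasSum_zeta_two.tsum_eq
    have hsplit2 := S_split (le_refl 2)
    have hπ : π ≤ 3.15 := by linarith [Real.pi_lt_d2]
    have hπ0 : 0 ≤ π := Real.pi_pos.le
    nlinarith [hS2, hsplit2]
  rw [tsum_mul_left] at htail
  have h4 : (0 : ℝ) < 4 / 2 ^ k := by positivity
  nlinarith [htail, htail2]

/-- With `α_s = 2Γ(2s+2)ζ(2s)ζ(2s+2)/(s·(2π)^{4s+2})`, the sequence is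
increasing from `s = 22` onward: `α_s ≤ α_{s+1}` for all `s ≥ 22`. -/
theorem alpha_increasing_from_22 :
    ∀ s : ℕ, 22 ≤ s →
      (2 * Real.Gamma (2 * (s : ℝ) + 2) * (riemannZeta (2 * (s : ℕ))).re *
          (riemannZeta (2 * (s : ℕ) + 2)).re / ((s : ℝ) * (2 * π) ^ (4 * s + 2))) ≤
      (2 * Real.Gamma (2 * ((s : ℝ) + 1) + 2) * (riemannZeta (2 * (s + 1 : ℕ))).re *
          (riemannZeta (2 * (s + 1 : ℕ) + 2)).re /
            (((s : ℝ) + 1) * (2 * π) ^ (4 * (s + 1) + 2))) := by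
  intro s hs
  have ht : (22 : ℝ) ≤ (s : ℝ) := by exact_mod_cast hs
  -- rewrite the zeta arguments as casts of naturals
  have e1 : (2 * (s : ℂ)) = ((2 * s : ℕ) : ℂ) := by push_cast; ring
  have e2 : (2 * (s : ℂ) + 2) = ((2 * s + 2 : ℕ) : ℂ) := by push_cast; ring
  have e3 : (2 * ((s + 1 : ℕ) : ℂ)) = ((2 * s + 2 : ℕ) : ℂ) := by push_cast; ring
  have e4 : (2 * ((s + 1 : ℕ) : ℂ) + 2) = ((2 * s + 4 : ℕ) : ℂ) := by push_cast; ring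
  rw [e2, e1, e4, e3, zeta_re_eq (by omega : 1 < 2 * s),
    zeta_re_eq (by omega : 1 < 2 * s + 2), zeta_re_eq (by omega : 1 < 2 * s + 4)]
  -- Gamma recurrence
  have hG : Real.Gamma (2 * ((s : ℝ) + 1) + 2)
      = (2 * (s : ℝ) + 3) * (2 * (s : ℝ) + 2) * Real.Gamma (2 * (s : ℝ) + 2) := by
    have h1 : 2 * ((s : ℝ) + 1) + 2 = (2 * (s : ℝ) + 3) + 1 := by ring
    have h2 : 2 * (s : ℝ) + 3 = (2 * (s : ℝ) + 2) + 1 := by ring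
    rw [h1, Real.Gamma_add_one (by positivity), h2, Real.Gamma_add_one (by positivity), ← h2]
    ring
  rw [hG]
  -- pow split
  have hpow : (2 * π) ^ (4 * (s + 1) + 2) = (2 * π) ^ (4 * s + 2) * (2 * π) ^ 4 := by
    have : 4 * (s + 1) + 2 = (4 * s + 2) + 4 := by omega
    rw [this, pow_add]
  rw [hpow]
  set t : ℝ := (s : ℝ)
  set G : ℝ := Real.Gamma (2 * t + 2) with hGdef
  set P : ℝ := (2 * π) ^ (4 * s + 2) with hPdef
  set A : ℝ := S (2 * s)
  set B : ℝ := S (2 * s + 2)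
  set C : ℝ := S (2 * s + 4)
  have hGpos : 0 < G := Real.Gamma_pos_of_pos (by positivity)
  have hPpos : 0 < P := by positivity
  have hA1 : 1 ≤ A := one_le_S (by omega)
  have hB1 : 1 ≤ B := one_le_S (by omega)
  have hC1 : 1 ≤ C := one_le_S (by omega)
  have hA2 : A ≤ 1.1 := by
    have hSle := S_le (by omega : 2 ≤ 2 * s)
    have hp : (2 : ℝ) ^ 6 ≤ 2 ^ (2 * s) := by
      apply pow_le_pow_right₀ one_le_two
      omega
    have h2 : (4 : ℝ) / 2 ^ (2 * s) ≤ 4 / 2 ^ 6 := by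
      apply div_le_div_of_nonneg_left (by norm_num) (by positivity) hp
    calc A ≤ 1 + 4 / 2 ^ (2 * s) := hSle
      _ ≤ 1 + 4 / 2 ^ 6 := by linarith
      _ ≤ 1.1 := by norm_num
  -- the key numeric inequality
  have hπ : π ≤ 3.15 := Real.pi_lt_d2.le
  have hπ0 : 0 < π := Real.pi_pos
  have hπ2 : π ^ 2 ≤ 10 := by nlinarith
  have hπ4 : π ^ 4 ≤ 100 := by nlinarith [hπ2, sq_nonneg π, sq_nonneg (π ^ 2)]
  have key : (t + 1) * (2 * π) ^ 4 * A ≤ (2 * t + 3) * (2 * t + 2) * t * C := by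
    have h1 : (t + 1) * (2 * π) ^ 4 * A ≤ (t + 1) * (16 * 100) * 1.1 := by
      have hQ : (2 * π) ^ 4 = 16 * π ^ 4 := by ring
      rw [hQ]
      have ht1 : (0 : ℝ) < t + 1 := by linarith
      have hAA : 16 * π ^ 4 * A ≤ 16 * 100 * 1.1 := by
        nlinarith [hπ4, hA2, hA1, pow_nonneg hπ0.le 4]
      calc (t + 1) * (16 * π ^ 4) * A = (t + 1) * (16 * π ^ 4 * A) := by ring
        _ ≤ (t + 1) * (16 * 100 * 1.1) := mul_le_mul_of_nonneg_left hAA (by linarith)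
        _ = (t + 1) * (16 * 100) * 1.1 := by ring
    have h22 : (0 : ℝ) ≤ t - 22 := by linarith
    have h2 : (t + 1) * (16 * 100) * 1.1 ≤ (2 * t + 3) * (2 * t + 2) * t * 1 := by
      nlinarith [mul_nonneg (mul_nonneg h22 h22) h22, sq_nonneg (t - 22),
        mul_nonneg h22 (sq_nonneg (t - 22))]
    have h3 : (2 * t + 3) * (2 * t + 2) * t * 1 ≤ (2 * t + 3) * (2 * t + 2) * t * C := by
      have : (0 : ℝ) ≤ (2 * t + 3) * (2 * t + 2) * t := by positivity
      nlinarith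
    linarith
  rw [div_le_div_iff₀ (by positivity) (by positivity)]
  calc 2 * G * A * B * ((t + 1) * (P * (2 * π) ^ 4))
      = (2 * G * B * P) * ((t + 1) * (2 * π) ^ 4 * A) := by ring
    _ ≤ (2 * G * B * P) * ((2 * t + 3) * (2 * t + 2) * t * C) := by
        apply mul_le_mul_of_nonneg_left key
        positivity
    _ = 2 * ((2 * t + 3) * (2 * t + 2) * G) * B * C * (t * P) := by ring
end
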